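/- arXiv:2208.03212 — 13 statements merged into one kernel-verified Lean document; each statement's English description precedes it below -/
import Mathlib

section
/- Let p be a prime. Then the Davenport constant of the cyclic group ℤ/pℤ equals p; that is, every multiset over ZMod p of cardinality p contains a nonempty submultiset whose sum is zero, there exists a zero-sum-free multiset of cardinality p−1, and moreover every zero-sum-free multiset over ZMod p of cardinality p−1 consists of a single nonzero element u repeated p−1 times. -/
/-!
Write `Σ(S)` for the set of sums of nonempty submultisets of `S`. If `a ::ₘ S` is zero-sum-free,
then `Σ(a ::ₘ S)` is strictly larger than `Σ(S)`: otherwise `Σ(S)` contains `a` and is closed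
under `x ↦ a + x`, so it contains every positive multiple of `a`, among them `|G| • a = 0`.
Hence a zero-sum-free `S` has `|S| ≤ |Σ(S)| ≤ |G| - 1`. If moreover `|S| = |G| - 1` and `S`
contained two distinct elements `u, b`, the pair `{u, b}` alone would contribute the three
subsums `u, b, u + b`, one more than the count allows.
-/

open Multiset

variable {G : Type*} [AddCommGroup G]

def ZeroSumFree (S : Multiset G) : Prop :=
  ∀ T : Multiset G, T ≤ S → T ≠ 0 → T.sum ≠ 0

theorem ZeroSumFree.mono {S S' : Multiset G} (h : ZeroSumFree S') (hle : S ≤ S') :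
    ZeroSumFree S :=
  fun T hT => h T (hT.trans hle)

theorem ZeroSumFree.ne_zero_of_mem {S : Multiset G} (h : ZeroSumFree S) {u : G} (hu : u ∈ S) :
    u ≠ 0 := by
  simpa using h {u} (singleton_le.2 hu) (singleton_ne_zero u)

theorem zeroSumFree_replicate_addOrderOf_sub_one (g : G) :
    ZeroSumFree (replicate (addOrderOf g - 1) g) := by
  intro T hT hT0
  obtain ⟨k, hk, rfl⟩ := le_replicate_iff.1 hT
  have hk0 : k ≠ 0 := by rintro rfl; exact hT0 rfl
  rw [sum_replicate, Ne, addOrderOf_dvd_iff_nsmul_eq_zero.symm]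
  exact fun hdvd => absurd (Nat.le_of_dvd (Nat.pos_of_ne_zero hk0) hdvd) (by omega)

theorem succ_nsmul_mem_of_add_mem {s : Finset G} {a : G} (ha : a ∈ s)
    (hadd : ∀ x ∈ s, a + x ∈ s) (k : ℕ) : (k + 1) • a ∈ s := by
  induction k with
  | zero => simpa using ha
  | succ k ih => simpa [succ_nsmul' a (k + 1)] using hadd _ ih

section Subsums

variable [DecidableEq G]

/-- The set `Σ(S)` of the header. -/
def subsums (S : Multiset G) : Finset G :=
  (S.powerset.toFinset.filter (· ≠ 0)).image Multiset.sum

theorem mem_subsums {S : Multiset G} {x : G} :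
    x ∈ subsums S ↔ ∃ T : Multiset G, T ≤ S ∧ T ≠ 0 ∧ T.sum = x := by
  simp [subsums, and_assoc]

@[simp]
theorem subsums_zero : subsums (0 : Multiset G) = ∅ := by
  ext x
  simp only [mem_subsums, le_zero, Finset.notMem_empty, iff_false]
  rintro ⟨T, rfl, hT0, -⟩
  exact hT0 rfl

theorem subsums_mono {S S' : Multiset G} (hle : S ≤ S') : subsums S ⊆ subsums S' := by
  intro x hx
  obtain ⟨T, hT, hT0, rfl⟩ := mem_subsums.1 hx
  exact mem_subsums.2 ⟨T, hT.trans hle, hT0, rfl⟩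

theorem zeroSumFree_iff_zero_notMem_subsums {S : Multiset G} :
    ZeroSumFree S ↔ 0 ∉ subsums S := by
  simp [ZeroSumFree, mem_subsums]

theorem add_mem_subsums_cons {S : Multiset G} (a : G) {x : G} (hx : x ∈ subsums S) :
    a + x ∈ subsums (a ::ₘ S) := by
  obtain ⟨T, hT, -, rfl⟩ := mem_subsums.1 hx
  exact mem_subsums.2 ⟨a ::ₘ T, cons_le_cons a hT, cons_ne_zero, sum_cons a T⟩

theorem mem_subsums_cons_self (S : Multiset G) (a : G) : a ∈ subsums (a ::ₘ S) :=
  mem_subsums.2 ⟨{a}, singleton_le.2 (mem_cons_self a S), singleton_ne_zero a, sum_singleton a⟩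

theorem three_le_card_subsums_pair {u b : G} (hu : u ≠ 0) (hb : b ≠ 0) (hub : u ≠ b) :
    3 ≤ (subsums {u, b}).card := by
  have hsub : ({u, b, u + b} : Finset G) ⊆ subsums {u, b} := by
    intro x hx
    simp only [Finset.mem_insert, Finset.mem_singleton] at hx
    rcases hx with rfl | rfl | rfl
    · exact mem_subsums_cons_self _ _
    · exact subsums_mono (le_cons_self _ u) (mem_subsums_cons_self 0 x)
    · exact add_mem_subsums_cons u (mem_subsums_cons_self 0 b)
  have hcard : ({u, b, u + b} : Finset G).card = 3 := by
    rw [Finset.card_insert_of_notMem (by simp [hub, hb]),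
      Finset.card_insert_of_notMem (by simp [hu]), Finset.card_singleton]
  exact hcard ▸ Finset.card_le_card hsub

variable [Fintype G]

theorem card_subsums_lt_cons {S : Multiset G} {a : G} (h : ZeroSumFree (a ::ₘ S)) :
    (subsums S).card < (subsums (a ::ₘ S)).card := by
  have hsub : subsums S ⊆ subsums (a ::ₘ S) := subsums_mono (le_cons_self S a)
  refine Finset.card_lt_card (Finset.ssubset_iff_subset_ne.2 ⟨hsub, fun heq => ?_⟩)
  have hmul := succ_nsmul_mem_of_add_mem (heq ▸ mem_subsums_cons_self S a)
    (fun x hx => heq ▸ add_mem_subsums_cons a hx) (Fintype.card G - 1)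
  rw [Nat.sub_add_cancel Fintype.card_pos, card_nsmul_eq_zero] at hmul
  exact zeroSumFree_iff_zero_notMem_subsums.1 (h.mono (le_cons_self S a)) hmul

theorem card_subsums_add_card_le {U V : Multiset G} (h : ZeroSumFree (U + V)) :
    (subsums V).card + card U ≤ (subsums (U + V)).card := by
  induction U using Multiset.induction with
  | empty => simp
  | cons a U ih =>
    rw [cons_add] at h ⊢
    have := ih (h.mono (le_cons_self _ a))
    have := card_subsums_lt_cons h
    rw [card_cons]
    omega

theorem card_subsums_le_card_sub_one {S : Multiset G} (h : ZeroSumFree S) :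
    (subsums S).card ≤ Fintype.card G - 1 := by
  have hsub : subsums S ⊆ Finset.univ.erase 0 := fun x hx =>
    Finset.mem_erase.2 ⟨fun hx0 => zeroSumFree_iff_zero_notMem_subsums.1 h (hx0 ▸ hx),
      Finset.mem_univ x⟩
  simpa [Finset.card_erase_of_mem] using Finset.card_le_card hsub

theorem ZeroSumFree.card_le {S : Multiset G} (h : ZeroSumFree S) :
    card S ≤ Fintype.card G - 1 := by
  have := card_subsums_add_card_le (U := S) (V := 0) (by simpa using h)
  simp only [subsums_zero, Finset.card_empty, zero_add, add_zero] at this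
  exact this.trans (card_subsums_le_card_sub_one h)

theorem ZeroSumFree.eq_replicate_of_card_eq {S : Multiset G} (h : ZeroSumFree S)
    (hcard : card S = Fintype.card G - 1) {u : G} (hu : u ∈ S) :
    S = replicate (card S) u := by
  refine eq_replicate.2 ⟨rfl, fun b hb => by_contra fun hbu => ?_⟩
  have hpair : ({u, b} : Multiset G) ≤ S :=
    (cons_le_cons u (singleton_le.2 ((mem_erase_of_ne hbu).2 hb))).trans_eq (cons_erase hu)
  obtain ⟨R, rfl⟩ := Multiset.le_iff_exists_add.1 hpair
  rw [add_comm] at h hcard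
  have hchain := card_subsums_add_card_le h
  have hthree := three_le_card_subsums_pair (h.ne_zero_of_mem (by simp))
    (h.ne_zero_of_mem (by simp)) (Ne.symm hbu)
  have hbound := card_subsums_le_card_sub_one h
  simp only [card_add, insert_eq_cons, card_cons, card_singleton] at hcard
  omega

end Subsums

/-- Olson: `D(ℤ/pℤ) = p`. Every multiset over `ZMod p` of cardinality `p` has a
nonempty zero-sum submultiset, there is a zero-sum-free multiset of cardinality
`p - 1`, and every zero-sum-free multiset of cardinality `p - 1` is of the form
`[u]^(p-1)` for a nonzero `u`. -/
theorem davenport_zmod_p (p : ℕ) (hp : p.Prime) :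
    (∀ S : Multiset (ZMod p), p ≤ Multiset.card S →
      ∃ T : Multiset (ZMod p), T ≤ S ∧ T ≠ 0 ∧ T.sum = 0) ∧
    (∃ S : Multiset (ZMod p), Multiset.card S = p - 1 ∧
      ∀ T : Multiset (ZMod p), T ≤ S → T ≠ 0 → T.sum ≠ 0) ∧
    (∀ S : Multiset (ZMod p), Multiset.card S = p - 1 →
      (∀ T : Multiset (ZMod p), T ≤ S → T ≠ 0 → T.sum ≠ 0) →
      ∃ u : ZMod p, u ≠ 0 ∧ S = Multiset.replicate (p - 1) u) := by
  have : NeZero p := ⟨hp.ne_zero⟩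
  have hcardG : Fintype.card (ZMod p) = p := ZMod.card p
  refine ⟨fun S hS => ?_, ?_, fun S hcard hS => ?_⟩
  · by_contra hfree
    push Not at hfree
    have hle : card S ≤ Fintype.card (ZMod p) - 1 := ZeroSumFree.card_le hfree
    have := hp.pos
    omega
  · have hfree := zeroSumFree_replicate_addOrderOf_sub_one (1 : ZMod p)
    rw [ZMod.addOrderOf_one] at hfree
    exact ⟨replicate (p - 1) 1, card_replicate _ _, hfree⟩
  · have := hp.two_le
    obtain ⟨u, hu⟩ := exists_mem_of_ne_zero (card_pos.1 (show 0 < card S by omega))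
    refine ⟨u, ZeroSumFree.ne_zero_of_mem hS hu, ?_⟩
    rw [← hcard]
    exact ZeroSumFree.eq_replicate_of_card_eq hS (by omega) hu
end

section
/- Let p be a prime. Then the Davenport constant of the group (ℤ/pℤ) ⊕ (ℤ/pℤ) equals 2p−1; that is, every multiset over ZMod p × ZMod p of cardinality 2p−1 contains a nonempty submultiset whose sum is zero, and there exists a zero-sum-free multiset over ZMod p × ZMod p of cardinality 2p−2. -/
open Finset MvPolynomial

/-- Olson: `D(ℤ/pℤ ⊕ ℤ/pℤ) = 2p - 1`. Every multiset over `ZMod p × ZMod p` of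
cardinality `2p - 1` has a nonempty zero-sum submultiset, and there exists a
zero-sum-free multiset of cardinality `2p - 2`. -/
theorem davenport_zmod_p_sq (p : ℕ) (hp : p.Prime) :
    (∀ S : Multiset (ZMod p × ZMod p), 2 * p - 1 ≤ Multiset.card S →
      ∃ T : Multiset (ZMod p × ZMod p), T ≤ S ∧ T ≠ 0 ∧ T.sum = 0) ∧
    (∃ S : Multiset (ZMod p × ZMod p), Multiset.card S = 2 * p - 2 ∧
      ∀ T : Multiset (ZMod p × ZMod p), T ≤ S → T ≠ 0 → T.sum ≠ 0) := by
  haveI : Fact p.Prime := ⟨hp⟩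
  have hp1 : 1 < p := hp.one_lt
  have hppos : 0 < p - 1 := by omega
  constructor
  · -- upper bound via Chevalley–Warning
    intro S hS
    obtain ⟨l, hl⟩ : ∃ l : List (ZMod p × ZMod p), (l : Multiset (ZMod p × ZMod p)) = S :=
      ⟨S.toList, S.coe_toList⟩
    have hn : 2 * p - 1 ≤ l.length := by
      rwa [← hl, Multiset.coe_card] at hS
    set n := l.length with hndef
    set f₁ : MvPolynomial (Fin n) (ZMod p) :=
      ∑ i : Fin n, C (l.get i).1 * X i ^ (p - 1) with hf₁
    set f₂ : MvPolynomial (Fin n) (ZMod p) :=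
      ∑ i : Fin n, C (l.get i).2 * X i ^ (p - 1) with hf₂
    have hdeg : ∀ (g : Fin n → ZMod p),
        (∑ i : Fin n, C (g i) * X i ^ (p - 1) : MvPolynomial (Fin n) (ZMod p)).totalDegree
          ≤ p - 1 := by
      intro g
      refine (totalDegree_finset_sum _ _).trans ?_
      refine Finset.sup_le fun i _ => ?_
      refine (totalDegree_mul _ _).trans ?_
      simp [totalDegree_X_pow]
    have hlt : f₁.totalDegree + f₂.totalDegree < Fintype.card (Fin n) := by
      have h1 := hdeg fun i => (l.get i).1
      have h2 := hdeg fun i => (l.get i).2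
      rw [hf₁, hf₂]
      simp only [Fintype.card_fin]
      omega
    have hdvd := char_dvd_card_solutions_of_add_lt p hlt
    have hzero : eval (0 : Fin n → ZMod p) f₁ = 0 ∧ eval (0 : Fin n → ZMod p) f₂ = 0 := by
      constructor <;> simp [hf₁, hf₂, map_sum, zero_pow hppos.ne']
    -- get a nonzero solution
    have hcard1 : 0 < Fintype.card { x // eval x f₁ = 0 ∧ eval x f₂ = 0 } :=
      Fintype.card_pos_iff.mpr ⟨⟨0, hzero⟩⟩
    have hcard : 1 < Fintype.card { x // eval x f₁ = 0 ∧ eval x f₂ = 0 } :=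
      lt_of_lt_of_le hp1 (Nat.le_of_dvd hcard1 hdvd)
    obtain ⟨⟨x, hx₁, hx₂⟩, hxne⟩ := Fintype.exists_ne_of_one_lt_card hcard ⟨0, hzero⟩
    have hxne0 : x ≠ 0 := fun h => hxne (Subtype.ext h)
    -- the support of x gives the zero-sum submultiset
    set A : Finset (Fin n) := Finset.univ.filter (fun i => x i ≠ 0) with hA
    have hAne : A.Nonempty := by
      obtain ⟨i, hi⟩ := Function.ne_iff.mp hxne0
      refine ⟨i, ?_⟩
      simp only [hA, Finset.mem_filter, Finset.mem_univ, true_and]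
      exact hi
    refine ⟨A.val.map l.get, ?_, ?_, ?_⟩
    · calc A.val.map l.get ≤ (Finset.univ : Finset (Fin n)).val.map l.get :=
            Multiset.map_le_map (by rw [hA]; exact Multiset.filter_le _ _)
        _ = S := by
            rw [← hl]
            have huniv : (Finset.univ : Finset (Fin n)).val = ↑(List.finRange n) := rfl
            rw [huniv, Multiset.map_coe, List.map_get_finRange]
    · intro h
      rw [Multiset.map_eq_zero] at h
      exact hAne.ne_empty (Finset.val_eq_zero.mp h)
    · have key : ∀ (g : Fin n → ZMod p),
          eval x (∑ i : Fin n, C (g i) * X i ^ (p - 1) : MvPolynomial (Fin n) (ZMod p)) =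
            ∑ i ∈ A, g i := by
        intro g
        rw [map_sum]
        rw [Finset.sum_filter]
        refine Finset.sum_congr rfl fun i _ => ?_
        by_cases hi : x i ≠ 0
        · simp [hi, ZMod.pow_card_sub_one_eq_one hi]
        · push_neg at hi
          simp [hi, zero_pow hppos.ne']
      have hsum : (A.val.map l.get).sum = ∑ i ∈ A, l.get i := rfl
      rw [hsum, Prod.ext_iff]
      constructor
      · rw [Prod.fst_sum, ← key fun i => (l.get i).1, ← hf₁, hx₁]
        rfl
      · rw [Prod.snd_sum, ← key fun i => (l.get i).2, ← hf₂, hx₂]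
        rfl
  · -- lower bound construction
    refine ⟨Multiset.replicate (p - 1) ((1 : ZMod p), (0 : ZMod p)) +
      Multiset.replicate (p - 1) ((0 : ZMod p), (1 : ZMod p)), ?_, ?_⟩
    · simp [Multiset.card_replicate]; omega
    · intro T hT hT0
      set u : ZMod p × ZMod p := (1, 0) with hu
      set v : ZMod p × ZMod p := (0, 1) with hv
      have huv : u ≠ v := by
        simp [hu, hv, Prod.ext_iff]
      set a := T.count u with ha
      set b := T.count v with hb
      have hmem : ∀ z ∈ T, z = u ∨ z = v := by
        intro z hz
        have := Multiset.mem_of_le hT hz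
        simp only [Multiset.mem_add, Multiset.eq_of_mem_replicate] at this
        rcases this with h | h
        · exact Or.inl (Multiset.eq_of_mem_replicate h)
        · exact Or.inr (Multiset.eq_of_mem_replicate h)
      have hTeq : T = Multiset.replicate a u + Multiset.replicate b v := by
        ext z
        rw [Multiset.count_add, Multiset.count_replicate, Multiset.count_replicate]
        by_cases h1 : z = u
        · subst h1
          rw [if_pos rfl, if_neg (fun h : v = u => huv h.symm), add_zero, ha]
        · by_cases h2 : z = v
          · subst h2
            rw [if_neg huv, if_pos rfl, zero_add, hb]
          · have hzT : z ∉ T := fun hz => by rcases hmem z hz with h | h <;> simp_all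
            rw [if_neg (fun h : u = z => h1 h.symm), if_neg (fun h : v = z => h2 h.symm),
              add_zero, Multiset.count_eq_zero_of_notMem hzT]
      have hale : a ≤ p - 1 := by
        have := Multiset.count_le_of_le u hT
        simpa [Multiset.count_replicate, huv, hu, hv, ← ha] using this
      have hble : b ≤ p - 1 := by
        have := Multiset.count_le_of_le v hT
        simpa [Multiset.count_replicate, huv.symm, hu, hv, ← hb] using this
      have hab : 0 < a + b := by
        rcases Multiset.exists_mem_of_ne_zero hT0 with ⟨z, hz⟩
        rcases hmem z hz with h | h
        · have : 0 < a := Multiset.count_pos.mpr (h ▸ hz)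
          omega
        · have : 0 < b := Multiset.count_pos.mpr (h ▸ hz)
          omega
      rw [hTeq]
      simp only [Multiset.sum_add, Multiset.sum_replicate, hu, hv]
      intro hcon
      rw [Prod.ext_iff] at hcon
      simp only [Prod.smul_mk, Prod.fst_add, Prod.snd_add, smul_zero, smul_eq_mul,
        nsmul_eq_mul, mul_one, add_zero, zero_add, Prod.fst_zero, Prod.snd_zero] at hcon
      obtain ⟨hca, hcb⟩ := hcon
      have hpa : p ∣ a := (ZMod.natCast_eq_zero_iff a p).mp hca
      have hpb : p ∣ b := (ZMod.natCast_eq_zero_iff b p).mp hcb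
      have ha0 : a = 0 := Nat.eq_zero_of_dvd_of_lt hpa (by omega)
      have hb0 : b = 0 := Nat.eq_zero_of_dvd_of_lt hpb (by omega)
      omega
end

section
/- Let p be an odd prime and a, b, c ∈ 𝔽_p with a = 0 and b ≠ 0. Then a multiset S over 𝔽_p is an extremal φ-zero-free sequence (i.e., S is φ-zero-free of cardinality D(φ,p) − 1 = p − 1) if and only if there exist u ∈ 𝔽_p \ {0, −c·b⁻¹} and an integer α with 0 ≤ α ≤ p−1 such that S = [u]^α [−u − c·b⁻¹]^{p−1−α}. -/
/-- `phi a b c S = a·(∑_{x∈S} x)² + b·(∑_{x∈S} x²) + c·(∑_{x∈S} x)`,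
sums taken with multiplicity. -/
def phi {p : ℕ} (a b c : ZMod p) (S : Multiset (ZMod p)) : ZMod p :=
  a * S.sum ^ 2 + b * (S.map (fun x => x ^ 2)).sum + c * S.sum

/-- `S` is φ-zero-free: no nonempty submultiset `T` of `S` has `phi a b c T = 0`. -/
def PhiZeroFree {p : ℕ} (a b c : ZMod p) (S : Multiset (ZMod p)) : Prop :=
  ∀ T : Multiset (ZMod p), T ≤ S → T ≠ 0 → phi a b c T ≠ 0

/-- The set of positive lengths `ℓ` such that every multiset over `ZMod p` of
cardinality at least `ℓ` has a nonempty submultiset `T` with `phi a b c T = 0`.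
The Davenport φ-constant `D(φ,p)` is the least element of this set. -/
def DavSet {p : ℕ} (a b c : ZMod p) : Set ℕ :=
  {ℓ : ℕ | 0 < ℓ ∧ ∀ S : Multiset (ZMod p), ℓ ≤ Multiset.card S →
    ∃ T : Multiset (ZMod p), T ≤ S ∧ T ≠ 0 ∧ phi a b c T = 0}


open Multiset

variable {p : ℕ}

/-- Subset sums (including the empty sum 0) of a multiset over `ZMod p`. -/
def SS (M : Multiset (ZMod p)) : Finset (ZMod p) :=
  (M.powerset.map Multiset.sum).toFinset

lemma mem_SS {M : Multiset (ZMod p)} {s : ZMod p} :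
    s ∈ SS M ↔ ∃ T, T ≤ M ∧ T.sum = s := by
  simp [SS, Multiset.mem_powerset]

lemma zero_mem_SS (M : Multiset (ZMod p)) : (0 : ZMod p) ∈ SS M :=
  mem_SS.mpr ⟨0, Multiset.zero_le M, rfl⟩

lemma card_SS (hp : 0 < p) (M : Multiset (ZMod p))
    (hz : ∀ T ≤ M, T ≠ 0 → T.sum ≠ 0) :
    Multiset.card M + 1 ≤ (SS M).card := by
  induction M using Multiset.induction_on with
  | empty =>
      have : (0 : ZMod p) ∈ SS (0 : Multiset (ZMod p)) := zero_mem_SS 0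
      simpa using Finset.card_pos.mpr ⟨0, this⟩
  | cons x s ih =>
      have hzs : ∀ T ≤ s, T ≠ 0 → T.sum ≠ 0 :=
        fun T hT => hz T (hT.trans (le_cons_self s x))
      have hA := ih hzs
      have hx0 : x ≠ 0 := by
        have := hz {x} (by simpa using cons_le_cons x (Multiset.zero_le s)) (by simp)
        simpa using this
      set A := SS s with hAdef
      -- the union is contained in SS (x ::ₘ s)
      have hsub : A ∪ A.image (x + ·) ⊆ SS (x ::ₘ s) := by
        intro a ha
        rcases Finset.mem_union.mp ha with h | h
        · rcases mem_SS.mp h with ⟨T, hT, hs⟩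
          exact mem_SS.mpr ⟨T, hT.trans (le_cons_self s x), hs⟩
        · rcases Finset.mem_image.mp h with ⟨b, hb, hba⟩
          rcases mem_SS.mp hb with ⟨T, hT, hs⟩
          exact mem_SS.mpr ⟨x ::ₘ T, cons_le_cons x hT, by simp [hs, hba.symm]⟩
      -- the union has cardinality ≥ A.card + 1
      have hcardu : A.card + 1 ≤ (A ∪ A.image (x + ·)).card := by
        by_contra hcon
        push_neg at hcon
        have hle : (A ∪ A.image (x + ·)).card ≤ A.card := Nat.lt_succ_iff.mp hcon
        have hequ : A = A ∪ A.image (x + ·) :=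
          Finset.eq_of_subset_of_card_le (Finset.subset_union_left (s₂ := A.image (x + ·))) hle
        have himg : A.image (x + ·) ⊆ A := by
          intro a ha
          have h2 : a ∈ A ∪ A.image (x + ·) := Finset.mem_union_right _ ha
          rwa [← hequ] at h2
        have hmul : ∀ n : ℕ, ((n : ZMod p) * x) ∈ A := by
          intro n
          induction n with
          | zero => simpa using zero_mem_SS s
          | succ k ihk =>
              have : x + (k : ZMod p) * x ∈ A :=
                himg (Finset.mem_image.mpr ⟨_, ihk, rfl⟩)
              have he : ((k + 1 : ℕ) : ZMod p) * x = x + (k : ZMod p) * x := by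
                push_cast; ring
              rwa [he]
        have hp1 : ((p - 1 : ℕ) : ZMod p) * x = -x := by
          rw [Nat.cast_sub hp]
          simp [ZMod.natCast_self]
        have hnx : -x ∈ A := by rw [← hp1]; exact hmul _
        rcases mem_SS.mp hnx with ⟨T, hT, hs⟩
        have hT0 : T ≠ 0 := by
          rintro rfl
          rw [Multiset.sum_zero] at hs
          exact hx0 (neg_eq_zero.mp hs.symm)
        exact hz (x ::ₘ T) (cons_le_cons x hT) (by simp) (by simp [hs])
      calc Multiset.card (x ::ₘ s) + 1 = Multiset.card s + 1 + 1 := by simp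
        _ ≤ A.card + 1 := by omega
        _ ≤ (A ∪ A.image (x + ·)).card := hcardu
        _ ≤ (SS (x ::ₘ s)).card := Finset.card_le_card hsub

lemma zsf_const (hp : 0 < p) (M : Multiset (ZMod p))
    (hcard : Multiset.card M = p - 1)
    (hz : ∀ T ≤ M, T ≠ 0 → T.sum ≠ 0) :
    ∀ x ∈ M, ∀ y ∈ M, x = y := by
  haveI : NeZero p := ⟨hp.ne'⟩
  by_contra hc
  push_neg at hc
  obtain ⟨x, hxM, y, hyM, hxy⟩ := hc
  have hx0 : x ≠ 0 := by
    simpa using hz {x} (Multiset.singleton_le.mpr hxM) (by simp)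
  have hy0 : y ≠ 0 := by
    simpa using hz {y} (Multiset.singleton_le.mpr hyM) (by simp)
  have hyM' : y ∈ M.erase x := (Multiset.mem_erase_of_ne hxy.symm).mpr hyM
  set R := (M.erase x).erase y with hR
  have hxT : ∀ T ≤ R, x ::ₘ T ≤ M := by
    intro T hT
    have : x ::ₘ T ≤ x ::ₘ M.erase x :=
      cons_le_cons x (hT.trans (Multiset.erase_le y _))
    rwa [Multiset.cons_erase hxM] at this
  have hyT : ∀ T ≤ R, y ::ₘ T ≤ M := by
    intro T hT
    have h1 : y ::ₘ T ≤ y ::ₘ R := cons_le_cons y hT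
    rw [hR, Multiset.cons_erase hyM'] at h1
    exact h1.trans (Multiset.erase_le x M)
  have hxyT : ∀ T ≤ R, x ::ₘ y ::ₘ T ≤ M := by
    intro T hT
    have h1 : y ::ₘ T ≤ M.erase x := by
      have := cons_le_cons y hT
      rwa [hR, Multiset.cons_erase hyM'] at this
    have : x ::ₘ y ::ₘ T ≤ x ::ₘ M.erase x := cons_le_cons x h1
    rwa [Multiset.cons_erase hxM] at this
  have hzR : ∀ T ≤ R, T ≠ 0 → T.sum ≠ 0 := by
    intro T hT
    exact hz T (hT.trans ((Multiset.erase_le y _).trans (Multiset.erase_le x M)))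
  -- SS R avoids -x, -y, -(x+y)
  have havoid : SS R ⊆ Finset.univ \ ({-x, -y, -(x+y)} : Finset (ZMod p)) := by
    intro s hs
    obtain ⟨T, hT, hsum⟩ := mem_SS.mp hs
    rw [Finset.mem_sdiff]
    refine ⟨Finset.mem_univ _, ?_⟩
    simp only [Finset.mem_insert, Finset.mem_singleton]
    push_neg
    refine ⟨?_, ?_, ?_⟩
    · rintro rfl
      exact hz (x ::ₘ T) (hxT T hT) (by simp) (by simp [hsum])
    · rintro rfl
      exact hz (y ::ₘ T) (hyT T hT) (by simp) (by simp [hsum])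
    · rintro rfl
      exact hz (x ::ₘ y ::ₘ T) (hxyT T hT) (by simp)
        (by rw [Multiset.sum_cons, Multiset.sum_cons, hsum]; ring)
  have hcard3 : ({-x, -y, -(x+y)} : Finset (ZMod p)).card = 3 := by
    rw [Finset.card_insert_of_notMem, Finset.card_insert_of_notMem,
      Finset.card_singleton]
    · simp only [Finset.mem_singleton]
      intro h
      exact hx0 (by linear_combination h)
    · simp only [Finset.mem_insert, Finset.mem_singleton]
      push_neg
      constructor
      · exact fun h => hxy (neg_injective h)
      · intro h
        exact hy0 (by linear_combination h)
  have hcardsd : (Finset.univ \ ({-x, -y, -(x+y)} : Finset (ZMod p))).card = p - 3 := by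
    rw [Finset.card_sdiff_of_subset (Finset.subset_univ _), hcard3, Finset.card_univ, ZMod.card]
  have hSSle : (SS R).card ≤ p - 3 := by
    rw [← hcardsd]; exact Finset.card_le_card havoid
  have hkey := card_SS hp R hzR
  have hcardR : Multiset.card R = p - 1 - 1 - 1 := by
    rw [hR, Multiset.card_erase_of_mem hyM', Multiset.card_erase_of_mem hxM, hcard]
    rfl
  -- p ≥ 3 since M contains two distinct elements... derive contradiction numerically
  have hp3 : 3 ≤ p := by
    have h2 : 2 ≤ Multiset.card M := by
      have h1 : (x ::ₘ {y} : Multiset (ZMod p)) ≤ M := by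
        have : ({y} : Multiset (ZMod p)) ≤ M.erase x := Multiset.singleton_le.mpr hyM'
        have h2 := cons_le_cons x this
        rwa [Multiset.cons_erase hxM] at h2
      have := Multiset.card_le_card h1
      simpa using this
    omega
  omega

lemma exists_preimage {α β : Type*} [DecidableEq β] (f : α → β) :
    ∀ (s : Multiset α) (T' : Multiset β), T' ≤ s.map f → ∃ T ≤ s, T.map f = T' := by
  intro s
  induction s using Multiset.induction_on with
  | empty =>
      intro T' h
      simp only [Multiset.map_zero, Multiset.le_zero] at h
      exact ⟨0, le_refl _, by simp [h]⟩
  | cons x s ih =>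
      intro T' h
      rw [Multiset.map_cons] at h
      by_cases hm : f x ∈ T'
      · have h1 : T'.erase (f x) ≤ s.map f :=
          Multiset.erase_le_iff_le_cons.mpr h
        obtain ⟨T, hT, hTm⟩ := ih _ h1
        exact ⟨x ::ₘ T, cons_le_cons x hT,
          by rw [Multiset.map_cons, hTm, Multiset.cons_erase hm]⟩
      · have h1 : T' ≤ s.map f := (Multiset.le_cons_of_notMem hm).mp h
        obtain ⟨T, hT, hTm⟩ := ih _ h1
        exact ⟨T, hT.trans (le_cons_self s x), hTm⟩

lemma map_sum_poly (d : ZMod p) (T : Multiset (ZMod p)) :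
    (T.map (fun x => x ^ 2 + d * x)).sum
      = (T.map (fun x => x ^ 2)).sum + d * T.sum := by
  induction T using Multiset.induction_on with
  | empty => simp
  | cons x s ih => simp only [Multiset.map_cons, Multiset.sum_cons, ih]; ring

lemma phi_eq {b c : ZMod p} (hp : p.Prime) (hb : b ≠ 0) (T : Multiset (ZMod p)) :
    phi 0 b c T = b * (T.map (fun x => x ^ 2 + (c * b⁻¹) * x)).sum := by
  haveI : Fact p.Prime := ⟨hp⟩
  have hbc : b * (c * b⁻¹) = c := by field_simp
  rw [phi, map_sum_poly]
  linear_combination (-T.sum) * hbc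


/-- Theorem 1(i), second part: if `a = 0` and `b ≠ 0` then the extremal
φ-zero-free sequences (φ-zero-free multisets of cardinality `D(φ,p) - 1 = p - 1`)
are exactly the multisets `[u]^α [-u - c·b⁻¹]^(p-1-α)` with
`u ∉ {0, -c·b⁻¹}` and `0 ≤ α ≤ p - 1`. -/
theorem extremal_phi_a_zero (p : ℕ) (hp : p.Prime) (hodd : Odd p)
    (a b c : ZMod p) (ha : a = 0) (hb : b ≠ 0) (S : Multiset (ZMod p)) :
    (PhiZeroFree a b c S ∧ Multiset.card S = p - 1) ↔
      ∃ u : ZMod p, u ≠ 0 ∧ u ≠ -(c * b⁻¹) ∧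
        ∃ α : ℕ, α ≤ p - 1 ∧
          S = Multiset.replicate α u +
              Multiset.replicate (p - 1 - α) (-u - c * b⁻¹) := by
  haveI : Fact p.Prime := ⟨hp⟩
  subst ha
  have hp0 : 0 < p := hp.pos
  have hp3 : 3 ≤ p := by
    have h2 := hp.two_le
    have hmod := Nat.odd_iff.mp hodd
    omega
  set d : ZMod p := c * b⁻¹ with hd
  set f : ZMod p → ZMod p := fun x => x ^ 2 + d * x with hf
  constructor
  · rintro ⟨hzf, hcard⟩
    -- the mapped multiset is zero-sum-free
    have hzsum : ∀ T' ≤ S.map f, T' ≠ 0 → T'.sum ≠ 0 := by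
      intro T' hT' hT0 hsum
      obtain ⟨T, hTS, hTm⟩ := exists_preimage f S T' hT'
      have hT0' : T ≠ 0 := by rintro rfl; simp at hTm; exact hT0 hTm.symm
      exact hzf T hTS hT0' (by rw [phi_eq hp hb, ← hd, ← hf, hTm, hsum, mul_zero])
    have hcardM : Multiset.card (S.map f) = p - 1 := by
      rw [Multiset.card_map, hcard]
    have hconst := zsf_const hp0 (S.map f) hcardM hzsum
    have hS0 : S ≠ 0 := by
      intro h
      rw [h] at hcard
      simp at hcard
      omega
    obtain ⟨u, huS⟩ := Multiset.exists_mem_of_ne_zero hS0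
    have hfu : f u ≠ 0 := by
      have := hzf {u} (Multiset.singleton_le.mpr huS) (by simp)
      rw [phi_eq hp hb, ← hd, ← hf] at this
      intro h
      exact this (by simp [h])
    have hu0 : u ≠ 0 := by
      intro h; exact hfu (by simp [hf, h])
    have hud : u ≠ -d := by
      intro h
      apply hfu
      rw [hf]; simp only; rw [h]; ring
    refine ⟨u, hu0, hud, S.count u, ?_, ?_⟩
    · rw [← hcard]; exact Multiset.count_le_card u S
    · -- every element of S is u or -u - d
      have hall : ∀ x ∈ S, x = u ∨ x = -u - d := by
        intro x hxS
        have hfx : f x = f u :=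
          hconst (f x) (Multiset.mem_map_of_mem f hxS) (f u) (Multiset.mem_map_of_mem f huS)
        have hfactor : (x - u) * (x + u + d) = 0 := by
          rw [hf] at hfx
          simp only at hfx
          linear_combination hfx
        rcases mul_eq_zero.mp hfactor with h | h
        · left; linear_combination h
        · right; linear_combination h
      have hsplit := Multiset.filter_add_not (· = u) S
      have hfe : S.filter (· = u) = Multiset.replicate (S.count u) u :=
        Multiset.filter_eq' S u
      have hrest : S.filter (fun x => ¬ x = u) =
          Multiset.replicate (p - 1 - S.count u) (-u - d) := by
        rw [Multiset.eq_replicate]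
        constructor
        · have hc1 : Multiset.card (S.filter (· = u)) +
              Multiset.card (S.filter (fun x => ¬ x = u)) = p - 1 := by
            rw [← Multiset.card_add, hsplit, hcard]
          rw [hfe, Multiset.card_replicate] at hc1
          omega
        · intro b hbmem
          have hbS : b ∈ S := Multiset.mem_of_mem_filter hbmem
          have hbne : ¬ b = u := Multiset.of_mem_filter (p := fun x => ¬ x = u) hbmem
          rcases hall b hbS with h | h
          · exact absurd h hbne
          · exact h
      calc S = S.filter (· = u) + S.filter (fun x => ¬ x = u) := hsplit.symm
        _ = Multiset.replicate (S.count u) u +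
            Multiset.replicate (p - 1 - S.count u) (-u - d) := by rw [hfe, hrest]
  · rintro ⟨u, hu0, hud, α, hα, hSeq⟩
    have hud' : u + d ≠ 0 := by
      intro h; exact hud (by linear_combination h)
    set v : ZMod p := f u with hv
    have hv0 : v ≠ 0 := by
      have : v = u * (u + d) := by rw [hv, hf]; ring
      rw [this]
      exact mul_ne_zero hu0 hud'
    have hcard : Multiset.card S = p - 1 := by
      rw [hSeq]
      simp [Multiset.card_replicate]
      omega
    refine ⟨?_, hcard⟩
    intro T hTS hT0
    rw [phi_eq hp hb, ← hd, ← hf]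
    have hTall : ∀ x ∈ T, f x = v := by
      intro x hxT
      have hxS : x ∈ S := Multiset.mem_of_le hTS hxT
      rw [hSeq] at hxS
      rcases Multiset.mem_add.mp hxS with h | h
      · rw [Multiset.eq_of_mem_replicate h]
      · rw [Multiset.eq_of_mem_replicate h, hv, hf]
        simp only
        ring
    have hTmap : T.map f = Multiset.replicate (Multiset.card T) v := by
      rw [Multiset.eq_replicate]
      exact ⟨Multiset.card_map f T, by
        intro b hb'
        obtain ⟨x, hxT, hfx⟩ := Multiset.mem_map.mp hb'
        rw [← hfx]; exact hTall x hxT⟩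
    rw [hTmap, Multiset.sum_replicate, nsmul_eq_mul]
    apply mul_ne_zero hb
    apply mul_ne_zero _ hv0
    have hcardT : 0 < Multiset.card T := Multiset.card_pos.mpr hT0
    have hcardTle : Multiset.card T ≤ p - 1 := by
      rw [← hcard]; exact Multiset.card_le_card hTS
    intro hzero
    rw [ZMod.natCast_eq_zero_iff] at hzero
    exact Nat.not_dvd_of_pos_of_lt hcardT (by omega) hzero
end

section
/- Let p be an odd prime and a, b, c ∈ 𝔽_p with a ≠ 0 and b ≠ 0. Then D(φ,p) ≤ 2p − 1; equivalently, every multiset over 𝔽_p of cardinality 2p − 1 contains a nonempty submultiset T with φ(T) = 0. -/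
open MvPolynomial in
lemma phi_key (p : ℕ) (hp : p.Prime) (a b c : ZMod p)
    (S : Multiset (ZMod p)) (hS : 2 * p - 1 ≤ Multiset.card S) :
    ∃ T : Multiset (ZMod p), T ≤ S ∧ T ≠ 0 ∧ phi a b c T = 0 := by
  haveI : Fact p.Prime := ⟨hp⟩
  have hp2 := hp.two_le
  set l : List (ZMod p) := S.toList with hl
  have hlen : 2 * p - 1 ≤ l.length := by simpa [hl] using hS
  set m : ℕ := l.length with hm
  set x : Fin m → ZMod p := l.get with hx
  set L : MvPolynomial (Fin m) (ZMod p) := ∑ i, C (x i) * X i ^ (p - 1) with hL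
  set Q : MvPolynomial (Fin m) (ZMod p) := ∑ i, C ((x i) ^ 2) * X i ^ (p - 1) with hQ
  set f : MvPolynomial (Fin m) (ZMod p) := C a * L ^ 2 + C b * Q + C c * L with hf
  have hdeg_term : ∀ (y : ZMod p) (i : Fin m),
      (C y * X i ^ (p - 1) : MvPolynomial (Fin m) (ZMod p)).totalDegree ≤ p - 1 := by
    intro y i
    calc (C y * X i ^ (p - 1) : MvPolynomial (Fin m) (ZMod p)).totalDegree
        ≤ (C y : MvPolynomial (Fin m) (ZMod p)).totalDegree
            + ((X i : MvPolynomial (Fin m) (ZMod p)) ^ (p - 1)).totalDegree :=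
          totalDegree_mul _ _
      _ ≤ 0 + (p - 1) * 1 := by
          gcongr
          · exact le_of_eq (totalDegree_C y)
          · exact (totalDegree_pow _ _).trans (by rw [totalDegree_X])
      _ = p - 1 := by ring
  have hdegL : L.totalDegree ≤ p - 1 :=
    (totalDegree_finset_sum _ _).trans (Finset.sup_le fun i _ => hdeg_term _ i)
  have hdegQ : Q.totalDegree ≤ p - 1 :=
    (totalDegree_finset_sum _ _).trans (Finset.sup_le fun i _ => hdeg_term _ i)
  have hdegf : f.totalDegree < Fintype.card (Fin m) := by
    rw [Fintype.card_fin]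
    have h1 : (C a * L ^ 2 : MvPolynomial (Fin m) (ZMod p)).totalDegree ≤ 2 * (p - 1) := by
      refine (totalDegree_mul _ _).trans ?_
      rw [totalDegree_C]
      simpa using (totalDegree_pow L 2).trans (by omega)
    have h2 : (C b * Q : MvPolynomial (Fin m) (ZMod p)).totalDegree ≤ 2 * (p - 1) := by
      refine (totalDegree_mul _ _).trans ?_
      rw [totalDegree_C]; omega
    have h3 : (C c * L : MvPolynomial (Fin m) (ZMod p)).totalDegree ≤ 2 * (p - 1) := by
      refine (totalDegree_mul _ _).trans ?_
      rw [totalDegree_C]; omega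
    have hft : f.totalDegree ≤ 2 * (p - 1) := by
      rw [hf]
      exact (totalDegree_add _ _).trans
        (max_le ((totalDegree_add _ _).trans (max_le h1 h2)) h3)
    omega
  have hsub : p - 1 ≠ 0 := by omega
  have h0 : eval (0 : Fin m → ZMod p) f = 0 := by
    simp [hf, hL, hQ, map_sum, zero_pow hsub]
  have hdvd := char_dvd_card_solutions p hdegf
  have : ∃ t : Fin m → ZMod p, eval t f = 0 ∧ t ≠ 0 := by
    by_contra hcon
    push_neg at hcon
    have hone : Fintype.card {t : Fin m → ZMod p // eval t f = 0} = 1 :=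
      Fintype.card_eq_one_iff.mpr ⟨⟨0, h0⟩, fun y => Subtype.ext (hcon y y.2)⟩
    rw [hone] at hdvd
    exact absurd (Nat.le_of_dvd one_pos hdvd) (by omega)
  obtain ⟨t, ht0, htne⟩ := this
  classical
  set s : Finset (Fin m) := Finset.univ.filter (fun i => t i ≠ 0) with hs
  have hpow : ∀ i : Fin m, (t i) ^ (p - 1) = if t i ≠ 0 then 1 else 0 := by
    intro i
    by_cases h : t i = 0
    · simp [h, zero_pow hsub]
    · simp [h, ZMod.pow_card_sub_one_eq_one h]
  have hevalL : eval t L = ∑ i ∈ s, x i := by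
    rw [hL, map_sum, hs, Finset.sum_filter]
    apply Finset.sum_congr rfl
    intro i _
    simp only [map_mul, map_pow, eval_C, eval_X, hpow i]
    split <;> simp
  have hevalQ : eval t Q = ∑ i ∈ s, (x i) ^ 2 := by
    rw [hQ, map_sum, hs, Finset.sum_filter]
    apply Finset.sum_congr rfl
    intro i _
    simp only [map_mul, map_pow, eval_C, eval_X, hpow i]
    split <;> simp
  refine ⟨s.val.map x, ?_, ?_, ?_⟩
  · calc s.val.map x ≤ Finset.univ.val.map x :=
          Multiset.map_le_map (by exact Finset.val_le_iff.mpr (Finset.subset_univ s))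
      _ = S := by
          rw [Fin.univ_def]
          show Multiset.map l.get ↑(List.finRange l.length) = S
          rw [Multiset.map_coe, List.map_get_finRange, hl, Multiset.coe_toList]
  · simp only [ne_eq, Multiset.map_eq_zero, Finset.val_eq_zero]
    intro hempty
    apply htne
    funext i
    have := Finset.eq_empty_iff_forall_notMem.mp hempty i
    simp only [hs, Finset.mem_filter, Finset.mem_univ, true_and, not_not] at this
    exact this
  · have hsum : (s.val.map x).sum = ∑ i ∈ s, x i := (Finset.sum_eq_multiset_sum s x).symm
    have hsum2 : ((s.val.map x).map (fun y => y ^ 2)).sum = ∑ i ∈ s, (x i) ^ 2 := by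
      rw [Multiset.map_map]
      exact (Finset.sum_eq_multiset_sum s (fun i => x i ^ 2)).symm
    have heval : eval t f = a * (eval t L) ^ 2 + b * (eval t Q) + c * (eval t L) := by
      simp [hf]
    rw [phi, hsum, hsum2, ← hevalL, ← hevalQ, ← heval, ht0]

/-- Theorem 1(iv): if `a ≠ 0` and `b ≠ 0` then `D(φ,p) ≤ 2p - 1`; equivalently,
every multiset over `ZMod p` of cardinality `2p - 1` has a nonempty submultiset
`T` with `phi a b c T = 0`. -/
theorem davenport_phi_le (p : ℕ) (hp : p.Prime) (hodd : Odd p)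
    (a b c : ZMod p) (ha : a ≠ 0) (hb : b ≠ 0) :
    (∃ D : ℕ, IsLeast (DavSet a b c) D ∧ D ≤ 2 * p - 1) ∧
    ∀ S : Multiset (ZMod p), Multiset.card S = 2 * p - 1 →
      ∃ T : Multiset (ZMod p), T ≤ S ∧ T ≠ 0 ∧ phi a b c T = 0 := by
  have hp2 := hp.two_le
  have hmem : (2 * p - 1) ∈ DavSet a b c :=
    ⟨by omega, fun S hS => phi_key p hp a b c S hS⟩
  constructor
  · exact ⟨sInf (DavSet a b c),
      ⟨Nat.sInf_mem ⟨_, hmem⟩, fun ℓ hℓ => Nat.sInf_le hℓ⟩, Nat.sInf_le hmem⟩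
  · intro S hS
    exact phi_key p hp a b c S (le_of_eq hS.symm)
end

section
/- Let p be an odd prime, let λ be an integer with 1 ≤ λ ≤ p − 1, and take coefficients a = 1, b = (λ mod p), c = 0, so that φ(S) = (∑_{x∈S} x)² + λ·(∑_{x∈S} x²). If λ = p − 1 then D(φ,p) = 1; and if 1 ≤ λ ≤ p − 2 then p − λ + 1 ≤ D(φ,p) ≤ 2p − 1. -/
open Finset MvPolynomial in
private lemma phiUpperBound (p : ℕ) (hp : p.Prime) (hp3 : 3 ≤ p) (lam : ZMod p)
    (S : Multiset (ZMod p)) (hS : 2 * p - 1 ≤ Multiset.card S) :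
    ∃ T : Multiset (ZMod p), T ≤ S ∧ T ≠ 0 ∧
      T.sum ^ 2 + lam * (T.map (fun x => x ^ 2)).sum = 0 := by
  haveI : Fact p.Prime := ⟨hp⟩
  set l : List (ZMod p) := S.toList with hl
  have hlS : (l : Multiset (ZMod p)) = S := S.coe_toList
  set n : ℕ := l.length with hn
  have hnS : n = Multiset.card S := by rw [hn, ← hlS]; simp
  have hnn : 2 * p - 1 ≤ n := hnS ▸ hS
  set g : MvPolynomial (Fin n) (ZMod p) :=
    ∑ i : Fin n, C (l.get i) * X i ^ (p - 1) with hg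
  set h2 : MvPolynomial (Fin n) (ZMod p) :=
    ∑ i : Fin n, C (l.get i ^ 2) * X i ^ (p - 1) with hh2
  set f : MvPolynomial (Fin n) (ZMod p) := g ^ 2 + C lam * h2 with hf
  have hdegaux : ∀ (c : Fin n → ZMod p),
      (∑ i : Fin n, C (c i) * X i ^ (p - 1) : MvPolynomial (Fin n) (ZMod p)).totalDegree
        ≤ p - 1 := by
    intro c
    refine (totalDegree_finset_sum _ _).trans ?_
    refine Finset.sup_le fun i _ => ?_
    refine (totalDegree_mul _ _).trans ?_
    simp [totalDegree_X_pow]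
  have hgd : g.totalDegree ≤ p - 1 := by rw [hg]; exact hdegaux _
  have hhd : h2.totalDegree ≤ p - 1 := by rw [hh2]; exact hdegaux _
  have hdeg : f.totalDegree < Fintype.card (Fin n) := by
    rw [Fintype.card_fin]
    have h1 : f.totalDegree ≤ 2 * (p - 1) := by
      refine (totalDegree_add _ _).trans (max_le ?_ ?_)
      · refine (totalDegree_pow _ _).trans ?_; omega
      · refine (totalDegree_mul _ _).trans ?_
        simp only [totalDegree_C]; omega
    omega
  have hdvd := char_dvd_card_solutions p hdeg
  have hevalsum : ∀ (c : Fin n → ZMod p) (t : Fin n → ZMod p),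
      eval t (∑ i : Fin n, C (c i) * X i ^ (p - 1)) =
        ∑ i : Fin n, c i * t i ^ (p - 1) := by
    intro c t
    rw [map_sum]
    exact Finset.sum_congr rfl fun i _ => by simp
  have hevalf : ∀ t : Fin n → ZMod p, eval t f =
      (∑ i : Fin n, l.get i * t i ^ (p - 1)) ^ 2 +
        lam * ∑ i : Fin n, l.get i ^ 2 * t i ^ (p - 1) := by
    intro t
    rw [hf, map_add, map_mul, map_pow, eval_C, hg, hh2, hevalsum, hevalsum]
  have h0 : eval (fun _ => (0 : ZMod p)) f = 0 := by
    rw [hevalf]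
    have : (0 : ZMod p) ^ (p - 1) = 0 := zero_pow (by omega)
    simp [this]
  have hcard : 0 < Fintype.card { x : Fin n → ZMod p // eval x f = 0 } :=
    Fintype.card_pos_iff.mpr ⟨⟨_, h0⟩⟩
  have h2card : 1 < Fintype.card { x : Fin n → ZMod p // eval x f = 0 } := by
    rcases hdvd with ⟨k, hk⟩
    have hk1 : k ≠ 0 := by rintro rfl; omega
    have := Nat.le_mul_of_pos_right p (Nat.pos_of_ne_zero hk1)
    omega
  obtain ⟨⟨t, ht⟩, hne⟩ := Fintype.exists_ne_of_one_lt_card h2card ⟨_, h0⟩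
  have htne : t ≠ fun _ => (0 : ZMod p) := fun h => hne (Subtype.ext h)
  -- build T
  set s : Finset (Fin n) := univ.filter (fun i => t i ≠ 0) with hsdef
  set T : Multiset (ZMod p) := s.val.map l.get with hT
  have hpow : ∀ i : Fin n, t i ^ (p - 1) = if t i ≠ 0 then 1 else 0 := by
    intro i
    by_cases h : t i = 0
    · simp [h, zero_pow (by omega : p - 1 ≠ 0)]
    · simp [h, ZMod.pow_card_sub_one_eq_one h]
  have hsum : ∀ c : Fin n → ZMod p,
      ∑ i : Fin n, c i * t i ^ (p - 1) = ∑ i ∈ s, c i := by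
    intro c
    rw [hsdef, Finset.sum_filter]
    refine Finset.sum_congr rfl fun i _ => ?_
    rw [hpow i]
    by_cases h : t i = 0 <;> simp [h]
  refine ⟨T, ?_, ?_, ?_⟩
  · rw [hT, ← hlS]
    have h1 : s.val ≤ (univ : Finset (Fin n)).val := by
      exact Finset.val_le_iff.mpr (Finset.subset_univ s)
    have h2 : Multiset.map l.get (univ : Finset (Fin n)).val = (l : Multiset (ZMod p)) := by
      have : (univ : Finset (Fin n)).val = ((List.finRange n : List (Fin n)) : Multiset (Fin n)) := rfl
      rw [this, Multiset.map_coe, List.map_get_finRange]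
    calc Multiset.map l.get s.val ≤ Multiset.map l.get (univ : Finset (Fin n)).val :=
          Multiset.map_le_map h1
      _ = _ := h2
  · rw [hT]
    simp only [Ne, Multiset.map_eq_zero]
    intro hs0
    apply htne
    funext i
    by_contra hti
    have hmem : i ∈ s := by simp [hsdef, hti]
    rw [Finset.mem_def, hs0] at hmem
    simp at hmem
  · have hTsum : T.sum = ∑ i ∈ s, l.get i := by rw [hT]; rfl
    have hTsq : (T.map (fun x => x ^ 2)).sum = ∑ i ∈ s, l.get i ^ 2 := by
      rw [hT, Multiset.map_map]; rfl
    rw [hTsum, hTsq, ← hsum, ← hsum, ← hevalf]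
    exact ht

open Finset in
private lemma phiLowerBound (p : ℕ) (hp : p.Prime) (hp3 : 3 ≤ p) (lam : ℕ)
    (hlam1 : 1 ≤ lam) (hlam2 : lam ≤ p - 2) :
    ∃ S : Multiset (ZMod p), Multiset.card S = p - lam ∧
      ∀ T : Multiset (ZMod p), T ≤ S → T ≠ 0 →
        T.sum ^ 2 + (lam : ZMod p) * (T.map (fun x => x ^ 2)).sum ≠ 0 := by
  classical
  haveI : Fact p.Prime := ⟨hp⟩
  haveI : NeZero p := ⟨by omega⟩
  set L : ZMod p := (lam : ZMod p) with hLdef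
  have hcast0 : ∀ j : ℕ, 0 < j → j < p → (j : ZMod p) ≠ 0 := by
    intro j h1 hj2 hj
    rw [ZMod.natCast_eq_zero_iff] at hj
    exact absurd (Nat.le_of_dvd h1 hj) (by omega)
  have hL : L ≠ 0 := hcast0 lam hlam1 (by omega)
  have hL1 : (1 : ZMod p) + L ≠ 0 := by
    have h := hcast0 (1 + lam) (by omega) (by omega)
    rwa [Nat.cast_add, Nat.cast_one] at h
  have h2 : (2 : ZMod p) ≠ 0 := by
    have h := hcast0 2 (by omega) (by omega)
    rwa [Nat.cast_ofNat] at h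
  set q : ZMod p → ZMod p → ZMod p := fun t k => (t + k) ^ 2 + L * k + L * t ^ 2 with hq
  set I : Finset (ZMod p) := (Finset.range (p - lam)).image (Nat.cast : ℕ → ZMod p) with hI
  have hIneg1 : (-1 : ZMod p) ∉ I := by
    rw [hI]
    simp only [Finset.mem_image, Finset.mem_range, not_exists]
    rintro j ⟨hj, hj1⟩
    have hj0 : ((j + 1 : ℕ) : ZMod p) = 0 := by push_cast; rw [hj1]; ring
    exact hcast0 (j + 1) (by omega) (by omega) hj0
  set kch : ZMod p → ZMod p := fun t =>
    if h : ∃ k ∈ I, q t k = 0 then h.choose else 0 with hkch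
  set B : Finset (ZMod p) := univ.filter (fun t => ∃ k ∈ I, q t k = 0) with hB
  have hk_spec : ∀ t ∈ B, kch t ∈ I ∧ q t (kch t) = 0 := by
    intro t ht
    rw [hB, Finset.mem_filter] at ht
    rw [hkch]
    simp only
    rw [dif_pos ht.2]
    exact ht.2.choose_spec
  set f : ZMod p → ZMod p := fun t => if t = 1 then 2 else 2 * (t + kch t) / (t - 1) with hf
  have hkneg1 : ∀ t ∈ B, kch t ≠ -1 := by
    intro t ht hk
    exact hIneg1 (hk ▸ (hk_spec t ht).1)
  have hfval : ∀ t : ZMod p, t ≠ 1 → f t * (t - 1) = 2 * (t + kch t) := by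
    intro t ht1
    rw [hf]
    simp only [if_neg ht1]
    exact div_mul_cancel₀ _ (sub_ne_zero.mpr ht1)
  have hf1 : f (1 : ZMod p) = 2 := by rw [hf]; exact if_pos rfl
  have hfne2 : ∀ t ∈ B, t ≠ 1 → f t ≠ 2 := by
    intro t ht ht1 hft
    have hm := hfval t ht1
    rw [hft] at hm
    have h4 : (2 : ZMod p) * (kch t + 1) = 0 := by linear_combination -hm
    rcases mul_eq_zero.mp h4 with h | h
    · exact h2 h
    · exact hkneg1 t ht (by linear_combination h)
  have hfnen2 : ∀ t ∈ B, t ≠ 1 → f t ≠ -2 := by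
    intro t ht ht1 hft
    have hm := hfval t ht1
    rw [hft] at hm
    have hkeq : kch t = 1 - 2 * t := by
      have h4 : (2 : ZMod p) * (kch t - (1 - 2 * t)) = 0 := by linear_combination -hm
      rcases mul_eq_zero.mp h4 with h | h
      · exact absurd h h2
      · linear_combination h
    have hq0 := (hk_spec t ht).2
    rw [hq, hkeq] at hq0
    have hfac : ((1 : ZMod p) + L) * (1 - t) ^ 2 = 0 := by linear_combination hq0
    rcases mul_eq_zero.mp hfac with h | h
    · exact hL1 h
    · exact ht1 (by have := pow_eq_zero_iff (n := 2) (by norm_num) |>.mp h; linear_combination -this)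
  have hkey : ∀ t ∈ B, t ≠ 1 → (f t ^ 2 + 4 * L) * t = f t ^ 2 - 2 * L * f t := by
    intro t ht ht1
    have hm := hfval t ht1
    have hq0 := (hk_spec t ht).2
    rw [hq] at hq0
    have hfac : ((f t ^ 2 + 4 * L) * t - (f t ^ 2 - 2 * L * f t)) * (t - 1) = 0 := by
      linear_combination (4 : ZMod p) * hq0 + (f t * (t - 1) + 2 * (t + kch t) + 2 * L) * hm
    rcases mul_eq_zero.mp hfac with h | h
    · linear_combination h
    · exact absurd (by linear_combination h) ht1
  -- membership of 0 and 1 in B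
  have h0I : (0 : ZMod p) ∈ I := by
    rw [hI]
    exact Finset.mem_image.mpr ⟨0, Finset.mem_range.mpr (by omega), by simp⟩
  have h0B : (0 : ZMod p) ∈ B := by
    rw [hB, Finset.mem_filter]
    exact ⟨Finset.mem_univ _, 0, h0I, by rw [hq]; ring⟩
  have h1B : (1 : ZMod p) ∈ B := by
    rw [hB, Finset.mem_filter]
    refine ⟨Finset.mem_univ _, ((p - lam - 1 : ℕ) : ZMod p), ?_, ?_⟩
    · rw [hI]
      exact Finset.mem_image.mpr ⟨p - lam - 1, Finset.mem_range.mpr (by omega), rfl⟩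
    · have hc : ((p - lam - 1 : ℕ) : ZMod p) = -1 - L := by
        have h' : p - lam - 1 = p - (lam + 1) := by omega
        rw [h', Nat.cast_sub (by omega), ZMod.natCast_self]
        push_cast
        ring
      rw [hc, hq]
      ring
  -- cardinality bound
  have hmaps : ∀ t ∈ B, f t ∈ univ.erase (-2 : ZMod p) := by
    intro t ht
    rw [Finset.mem_erase]
    refine ⟨?_, Finset.mem_univ _⟩
    by_cases ht1 : t = 1
    · rw [ht1, hf1]
      intro hcon
      have h4 : (2 : ZMod p) * 2 = 0 := by linear_combination hcon
      rcases mul_eq_zero.mp h4 with h | h <;> exact h2 h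
    · exact hfnen2 t ht ht1
  have hinj : Set.InjOn f B := by
    intro t ht t' ht' hff
    by_cases ht1 : t = 1 <;> by_cases ht1' : t' = 1
    · rw [ht1, ht1']
    · exfalso
      apply hfne2 t' ht' ht1'
      rw [← hff, ht1]
      exact hf1
    · exfalso
      apply hfne2 t ht ht1
      rw [hff, ht1']
      exact hf1
    · have k1 := hkey t ht ht1
      have k2 := hkey t' ht' ht1'
      rw [hff] at k1
      by_cases hc : f t' ^ 2 + 4 * L = 0
      · exfalso
        rw [hc, zero_mul] at k1
        have hm2 : f t' = -2 := by
          have e1 : (-2 : ZMod p) * L * (f t' + 2) = 0 := by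
            linear_combination -k1 - hc
          rcases mul_eq_zero.mp e1 with h | h
          · exfalso
            rcases mul_eq_zero.mp h with h' | h'
            · exact h2 (by linear_combination -h')
            · exact hL h'
          · linear_combination h
        exact hfnen2 t' ht' ht1' hm2
      · exact mul_left_cancel₀ hc (k1.trans k2.symm)
  have hcardB : B.card ≤ p - 1 := by
    have hc := Finset.card_le_card_of_injOn f hmaps hinj
    rwa [Finset.card_erase_of_mem (Finset.mem_univ _), Finset.card_univ, ZMod.card] at hc
  have hex : ∃ t : ZMod p, t ∉ B := by
    by_contra hno
    push_neg at hno
    have huniv : B = univ := Finset.eq_univ_iff_forall.mpr hno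
    rw [huniv, Finset.card_univ, ZMod.card] at hcardB
    omega
  obtain ⟨t, htB⟩ := hex
  have htgood : ∀ k ∈ I, q t k ≠ 0 := by
    intro k hk hqk
    exact htB (by rw [hB, Finset.mem_filter]; exact ⟨Finset.mem_univ _, k, hk, hqk⟩)
  have ht1 : t ≠ 1 := fun h => htB (h ▸ h1B)
  have h1t : (1 : ZMod p) ≠ t := fun h => ht1 h.symm
  -- the zero-free multiset
  refine ⟨Multiset.replicate (p - lam - 1) (1 : ZMod p) + {t}, ?_, ?_⟩
  · simp [Multiset.card_replicate]
    omega
  · intro T hTle hT0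
    have hct : ∀ x, T.count x ≤ (Multiset.replicate (p - lam - 1) (1 : ZMod p) + {t}).count x :=
      fun x => Multiset.le_iff_count.mp hTle x
    set j : ℕ := T.count 1 with hjdef
    set e : ℕ := T.count t with hedef
    have hj : j ≤ p - lam - 1 := by
      have := hct 1
      rwa [Multiset.count_add, Multiset.count_replicate, if_pos rfl,
        Multiset.count_singleton, if_neg h1t, add_zero] at this
    have he : e ≤ 1 := by
      have := hct t
      rwa [Multiset.count_add, Multiset.count_replicate, if_neg h1t,
        Multiset.count_singleton, if_pos rfl, zero_add] at this
    have hTeq : T = Multiset.replicate j 1 + Multiset.replicate e t := by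
      ext x
      rw [Multiset.count_add, Multiset.count_replicate, Multiset.count_replicate]
      by_cases hx1 : x = 1
      · subst hx1
        rw [if_pos rfl, if_neg (fun h => h1t h.symm), add_zero, hjdef]
      · by_cases hxt : x = t
        · subst hxt
          rw [if_neg (fun h => hx1 h.symm), if_pos rfl, zero_add, hedef]
        · rw [if_neg (fun h => hx1 h.symm), if_neg (fun h => hxt h.symm)]
          have := hct x
          rwa [Multiset.count_add, Multiset.count_replicate,
            if_neg (fun h => hx1 h.symm), Multiset.count_singleton, if_neg hxt,
            add_zero, Nat.le_zero] at this
    have hje : 1 ≤ j + e := by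
      by_contra hc
      push_neg at hc
      have hj0 : j = 0 := by omega
      have he0 : e = 0 := by omega
      rw [hj0, he0] at hTeq
      simp only [Multiset.replicate_zero, add_zero] at hTeq
      exact hT0 hTeq
    have hsum : T.sum = (j : ZMod p) + (e : ZMod p) * t := by
      rw [hTeq, Multiset.sum_add, Multiset.sum_replicate, Multiset.sum_replicate,
        nsmul_eq_mul, nsmul_eq_mul, mul_one]
    have hsq : (T.map (fun x => x ^ 2)).sum = (j : ZMod p) + (e : ZMod p) * t ^ 2 := by
      rw [hTeq, Multiset.map_add, Multiset.map_replicate, Multiset.map_replicate,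
        Multiset.sum_add, Multiset.sum_replicate, Multiset.sum_replicate,
        nsmul_eq_mul, nsmul_eq_mul, one_pow, mul_one]
    rw [hsum, hsq]
    have he' : e = 0 ∨ e = 1 := by omega
    rcases he' with he' | he' <;> rw [he']
    · -- e = 0 : j copies of 1
      have hje' : 1 ≤ j := by omega
      simp only [Nat.cast_zero, zero_mul, add_zero]
      have hjne : (j : ZMod p) ≠ 0 := hcast0 j (by omega) (by omega)
      have hjL : (j : ZMod p) + L ≠ 0 := by
        have hh := hcast0 (j + lam) (by omega) (by omega)
        push_cast at hh
        rwa [← hLdef] at hh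
      intro h0
      have : (j : ZMod p) * ((j : ZMod p) + L) = 0 := by linear_combination h0
      rcases mul_eq_zero.mp this with h | h
      · exact hjne h
      · exact hjL h
    · -- e = 1
      simp only [Nat.cast_one, one_mul]
      intro h0
      refine htgood ((j : ZMod p)) ?_ ?_
      · rw [hI]
        exact Finset.mem_image.mpr ⟨j, Finset.mem_range.mpr (by omega), rfl⟩
      · rw [hq]
        linear_combination h0

/-- Theorem 3.1, general part: for `φ(S) = (∑x)² + λ(∑x²)` with `1 ≤ λ ≤ p - 1`,
if `λ = p - 1` then `D(φ,p) = 1`, and otherwise `p - λ + 1 ≤ D(φ,p) ≤ 2p - 1`. -/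
theorem davenport_phi_lambda (p : ℕ) (hp : p.Prime) (hodd : Odd p)
    (lam : ℕ) (hlam1 : 1 ≤ lam) (hlam2 : lam ≤ p - 1) :
    (lam = p - 1 → IsLeast (DavSet (1 : ZMod p) (lam : ZMod p) 0) 1) ∧
    (lam ≤ p - 2 →
      ∃ D : ℕ, IsLeast (DavSet (1 : ZMod p) (lam : ZMod p) 0) D ∧
        p - lam + 1 ≤ D ∧ D ≤ 2 * p - 1) := by
  have hp2 : 2 ≤ p := hp.two_le
  have hp3 : 3 ≤ p := by
    rcases hodd with ⟨k, hk⟩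
    omega
  constructor
  · -- lam = p - 1
    intro hlp
    constructor
    · refine ⟨Nat.one_pos, ?_⟩
      intro S hS
      have hSne : S ≠ 0 := by
        intro h
        rw [h] at hS
        simp at hS
      obtain ⟨x, hx⟩ := Multiset.exists_mem_of_ne_zero hSne
      refine ⟨{x}, Multiset.singleton_le.mpr hx, by simp, ?_⟩
      have hcast : ((lam : ℕ) : ZMod p) = -1 := by
        rw [hlp, Nat.cast_sub (by omega), ZMod.natCast_self, Nat.cast_one]
        ring
      simp only [phi, Multiset.sum_singleton, Multiset.map_singleton, one_mul,
        zero_mul, add_zero, hcast]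
      ring
    · intro ℓ hℓ
      exact hℓ.1
  · -- 1 ≤ lam ≤ p - 2
    intro hlam2'
    have hne : (2 * p - 1) ∈ DavSet (1 : ZMod p) (lam : ZMod p) 0 := by
      refine ⟨by omega, ?_⟩
      intro S hS
      obtain ⟨T, hT1, hT2, hT3⟩ := phiUpperBound p hp hp3 (lam : ZMod p) S hS
      refine ⟨T, hT1, hT2, ?_⟩
      simp only [phi, one_mul, zero_mul, add_zero]
      exact hT3
    have hDleast : IsLeast (DavSet (1 : ZMod p) (lam : ZMod p) 0)
        (sInf (DavSet (1 : ZMod p) (lam : ZMod p) 0)) :=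
      ⟨Nat.sInf_mem ⟨_, hne⟩, fun ℓ hℓ => Nat.sInf_le hℓ⟩
    refine ⟨sInf (DavSet (1 : ZMod p) (lam : ZMod p) 0), hDleast, ?_, Nat.sInf_le hne⟩
    obtain ⟨S0, hS0card, hS0free⟩ := phiLowerBound p hp hp3 lam hlam1 hlam2'
    by_contra hcon
    push_neg at hcon
    obtain ⟨T, hT1, hT2, hT3⟩ := hDleast.1.2 S0 (by omega)
    apply hS0free T hT1 hT2
    simpa only [phi, one_mul, zero_mul, add_zero] using hT3
end

section
/- Let p be a prime with p ≥ 5, take coefficients a = 1, b = −3 (i.e., λ = p − 3), c = 0, so that φ(S) = (∑_{x∈S} x)² − 3·(∑_{x∈S} x²), and let k be the smallest integer greater than 2 dividing p − 1. Then 4 ≤ D(φ,p) ≤ 2(k−1)·(p−1)/k + 1. -/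
/-!
For `k ∣ p - 1` with `k > 2`, every coset `u·μ_k` of the `k`-th roots of unity has
`∑ x = 0` and `∑ x² = 0` (geometric sums in `ζ` and `ζ²`), so `φ` vanishes on it for any
`a, b, c`. A `φ`-zero-free `S` avoids `0` and, since `φ(x,x,x) = 9x² - 9x² = 0`, repeats no
element three times; if it had more than `(k-1)(p-1)/k` distinct elements, the fewer than
`(p-1)/k` missing units could not meet all `(p-1)/k` cosets, and some coset would lie in `S`.
The lower bound comes from the zero-free multiset `{1, 1, -1}`, whose subsums of `φ` are
`-2, -6, -8`, all nonzero once `p ≥ 5`.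
-/

open Finset

theorem Multiset.card_le_mul_card_toFinset {α : Type*} [DecidableEq α] {s : Multiset α} {n : ℕ}
    (h : ∀ x, s.count x ≤ n) : card s ≤ n * #s.toFinset :=
  calc card s = ∑ x ∈ s.toFinset, s.count x := (Multiset.toFinset_sum_count_eq s).symm
    _ ≤ ∑ _x ∈ s.toFinset, n := Finset.sum_le_sum fun x _ => h x
    _ = n * #s.toFinset := by rw [Finset.sum_const, smul_eq_mul, mul_comm]

theorem Subgroup.exists_mul_mem_of_card_compl_lt_index {G : Type*} [Group G] [Fintype G]
    [DecidableEq G] (H : Subgroup G) (A : Finset G) (hA : #Aᶜ < H.index) :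
    ∃ g : G, ∀ h ∈ H, g * h ∈ A := by
  classical
  have hcard : #(Aᶜ.image (QuotientGroup.mk : G → G ⧸ H)) < #(univ : Finset (G ⧸ H)) := by
    rw [card_univ, ← Nat.card_eq_fintype_card, ← H.index_eq_card]
    exact card_image_le.trans_lt hA
  obtain ⟨q, -, hq⟩ := exists_mem_notMem_of_card_lt_card hcard
  obtain ⟨g, rfl⟩ := QuotientGroup.mk_surjective q
  refine ⟨g, fun h hh => ?_⟩
  by_contra hgh
  exact hq (mem_image.mpr ⟨g * h, mem_compl.mpr hgh, QuotientGroup.mk_mul_of_mem g hh⟩)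

theorem IsPrimitiveRoot.geom_sum_sq_eq_zero {K : Type*} [Field K] {ζ : K} {k : ℕ}
    (hζ : IsPrimitiveRoot ζ k) (hk : 2 < k) : ∑ i ∈ range k, (ζ ^ 2) ^ i = 0 := by
  rw [geom_sum_eq (hζ.pow_ne_one_of_pos_of_lt two_ne_zero hk), ← pow_mul, mul_comm, pow_mul,
    hζ.pow_eq_one, one_pow, sub_self, zero_div]

theorem phi_map_pow_mul_eq_zero {p : ℕ} [Fact p.Prime] (a b c : ZMod p) {ζ : ZMod p} {k : ℕ}
    (hζ : IsPrimitiveRoot ζ k) (hk : 2 < k) (u : ZMod p) :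
    phi a b c ((Multiset.range k).map (ζ ^ · * u)) = 0 := by
  have hsum : ((Multiset.range k).map (ζ ^ · * u)).sum = 0 := by
    change ∑ i ∈ range k, ζ ^ i * u = 0
    rw [← sum_mul, hζ.geom_sum_eq_zero (by omega), zero_mul]
  have hsq : (((Multiset.range k).map (ζ ^ · * u)).map (· ^ 2)).sum = 0 := by
    rw [Multiset.map_map]
    change ∑ i ∈ range k, (ζ ^ i * u) ^ 2 = 0
    simp_rw [mul_pow, ← pow_mul, mul_comm _ 2, pow_mul]
    rw [← sum_mul, hζ.geom_sum_sq_eq_zero hk, zero_mul]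
  rw [phi, hsum, hsq]
  ring

theorem exists_map_pow_mul_le_of_card_toFinset_gt {p : ℕ} [Fact p.Prime] {k d : ℕ} (hk : 0 < k)
    (hkd : p - 1 = k * d) {S : Multiset (ZMod p)} (h0 : (0 : ZMod p) ∉ S)
    (hS : (k - 1) * d < #S.toFinset) :
    ∃ ζ u : ZMod p, IsPrimitiveRoot ζ k ∧ (Multiset.range k).map (ζ ^ · * u) ≤ S := by
  classical
  have hp1 : 0 < p - 1 := by have := (Fact.out : p.Prime).two_le; omega
  have : NeZero (p - 1) := ⟨hp1.ne'⟩
  have hd : 0 < d := Nat.pos_of_mul_pos_left (hkd ▸ hp1)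
  have := HasEnoughRootsOfUnity.of_dvd (ZMod p) (Dvd.intro d hkd.symm)
  obtain ⟨ζ, hζ⟩ := HasEnoughRootsOfUnity.exists_primitiveRoot (ZMod p) k
  set H := Subgroup.zpowers (hζ.isUnit hk.ne').unit
  have hindex : H.index = d := by
    have := H.index_mul_card
    rw [Nat.card_zpowers, ← (hζ.isUnit_unit hk.ne').eq_orderOf, Nat.card_eq_fintype_card,
      ZMod.card_units, hkd] at this
    exact Nat.eq_of_mul_eq_mul_right hk (this.trans (mul_comm k d))
  set A := univ.filter fun u : (ZMod p)ˣ => (u : ZMod p) ∈ S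
  have hA : #S.toFinset ≤ #A := card_le_card_of_surjOn Units.val fun x hx =>
    ⟨Units.mk0 x (ne_of_mem_of_not_mem (Multiset.mem_toFinset.mp hx) h0),
      by simpa [A] using hx, rfl⟩
  have hAc : #Aᶜ < H.index := by
    have : k * d = (k - 1) * d + d := by
      rw [← Nat.succ_mul, Nat.succ_eq_add_one, Nat.sub_add_cancel hk]
    rw [card_compl, ZMod.card_units, hkd, hindex, this]
    generalize (k - 1) * d = m at hS ⊢
    omega
  obtain ⟨u, hu⟩ := H.exists_mul_mem_of_card_compl_lt_index A hAc
  have hmem : ∀ i, ζ ^ i * u ∈ S := fun i => by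
    simpa [A, mul_comm] using hu _ (Subgroup.npow_mem_zpowers _ i)
  refine ⟨ζ, u, hζ, (Multiset.le_iff_subset ?_).mpr ?_⟩
  · exact (Multiset.nodup_range k).map_on fun i hi j hj =>
      hζ.injOn_pow_mul u.ne_zero (by simpa using hi) (by simpa using hj)
  · intro x hx
    obtain ⟨i, -, rfl⟩ := Multiset.mem_map.mp hx
    exact hmem i

namespace PhiZeroFree

variable {p : ℕ} {a b c : ZMod p} {S : Multiset (ZMod p)}

theorem zero_notMem (hS : PhiZeroFree a b c S) : (0 : ZMod p) ∉ S := fun h0 =>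
  hS {0} (Multiset.singleton_le.mpr h0) (Multiset.singleton_ne_zero 0) (by simp [phi])

theorem count_le_two (hS : PhiZeroFree (1 : ZMod p) (-3) 0 S) (x : ZMod p) : S.count x ≤ 2 := by
  by_contra! h
  refine hS (Multiset.replicate 3 x) (Multiset.le_count_iff_replicate_le.mp h) (by simp) ?_
  simp only [phi, Multiset.map_replicate, Multiset.sum_replicate, nsmul_eq_mul]
  push_cast
  ring

theorem card_toFinset_le [Fact p.Prime] (hS : PhiZeroFree a b c S) {k d : ℕ} (hk : 2 < k)
    (hkd : p - 1 = k * d) : #S.toFinset ≤ (k - 1) * d := by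
  by_contra! h
  obtain ⟨ζ, u, hζ, hle⟩ :=
    exists_map_pow_mul_le_of_card_toFinset_gt (by omega) hkd hS.zero_notMem h
  refine hS _ hle ?_ (phi_map_pow_mul_eq_zero a b c hζ hk u)
  rw [← Multiset.card_pos, Multiset.card_map, Multiset.card_range]
  omega

theorem card_le [Fact p.Prime] (hS : PhiZeroFree (1 : ZMod p) (-3) 0 S) {k d : ℕ} (hk : 2 < k)
    (hkd : p - 1 = k * d) : Multiset.card S ≤ 2 * (k - 1) * d := by
  rw [mul_assoc]
  exact (Multiset.card_le_mul_card_toFinset hS.count_le_two).trans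
    (Nat.mul_le_mul_left 2 (hS.card_toFinset_le hk hkd))

end PhiZeroFree

theorem mem_davSet_of_sub_one_eq_mul {p : ℕ} [Fact p.Prime] {k d : ℕ} (hk : 2 < k)
    (hkd : p - 1 = k * d) : 2 * (k - 1) * d + 1 ∈ DavSet (1 : ZMod p) (-3) 0 := by
  refine ⟨Nat.succ_pos _, fun S hS => ?_⟩
  by_contra! h
  have := PhiZeroFree.card_le h hk hkd
  omega

theorem phiZeroFree_one_one_neg_one {p : ℕ} [Fact p.Prime] (hp : 5 ≤ p) :
    PhiZeroFree (1 : ZMod p) (-3) 0 {1, 1, -1} := by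
  have hne : ∀ n : ℕ, 0 < n → n < p → (n : ZMod p) ≠ 0 := fun n h0 hn h =>
    absurd (Nat.le_of_dvd h0 ((ZMod.natCast_eq_zero_iff n p).mp h)) (by omega)
  have h2 : (2 : ZMod p) ≠ 0 := by exact_mod_cast hne 2 (by norm_num) (by omega)
  have h3 : (3 : ZMod p) ≠ 0 := by exact_mod_cast hne 3 (by norm_num) (by omega)
  have h6 : (6 : ZMod p) ≠ 0 := by
    rw [show (6 : ZMod p) = 2 * 3 by norm_num]
    exact mul_ne_zero h2 h3
  have h8 : (8 : ZMod p) ≠ 0 := by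
    rw [show (8 : ZMod p) = 2 ^ 3 by norm_num]
    exact pow_ne_zero 3 h2
  intro T hT hT0
  rw [← Multiset.mem_powerset] at hT
  simp only [Multiset.insert_eq_cons, Multiset.powerset_cons, Multiset.map_add, Multiset.map_map,
    Function.comp_apply, Multiset.mem_add, Multiset.mem_powerset, Multiset.le_singleton,
    Multiset.mem_map, exists_eq_or_imp, Multiset.cons_zero, existsAndEq, true_and] at hT
  obtain ((rfl | rfl) | rfl | rfl) | (rfl | rfl) | rfl | rfl := hT
  · exact absurd rfl hT0
  all_goals norm_num [phi, h2, h6, h8]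

theorem four_le_of_mem_davSet {p : ℕ} [Fact p.Prime] (hp : 5 ≤ p) {ℓ : ℕ}
    (hℓ : ℓ ∈ DavSet (1 : ZMod p) (-3) 0) : 4 ≤ ℓ := by
  by_contra! h
  obtain ⟨T, hT, hT0, hφ⟩ := hℓ.2 {1, 1, -1} <| by
    simp only [Multiset.insert_eq_cons, Multiset.card_cons, Multiset.card_singleton]
    omega
  exact phiZeroFree_one_one_neg_one hp T hT hT0 hφ

/-- Theorem 3.1(b): for `p ≥ 5` and `φ(S) = (∑x)² - 3(∑x²)` (the case `λ = p - 3`),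
with `k` the smallest integer greater than `2` dividing `p - 1`, we have
`4 ≤ D(φ,p) ≤ 2(k-1)(p-1)/k + 1`. -/
theorem davenport_phi_lambda_p_sub_three (p : ℕ) (hp : p.Prime) (hp5 : 5 ≤ p)
    (k : ℕ) (hk : IsLeast {m : ℕ | 2 < m ∧ m ∣ p - 1} k) :
    ∃ D : ℕ, IsLeast (DavSet (1 : ZMod p) (-3) 0) D ∧
      4 ≤ D ∧ D ≤ 2 * (k - 1) * (p - 1) / k + 1 := by
  have : Fact p.Prime := ⟨hp⟩
  obtain ⟨⟨hk2, d, hkd⟩, -⟩ := hk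
  have hbound : 2 * (k - 1) * (p - 1) / k = 2 * (k - 1) * d := by
    rw [hkd, mul_left_comm, Nat.mul_div_cancel_left _ (by omega)]
  have hmem := mem_davSet_of_sub_one_eq_mul (p := p) hk2 hkd
  have hne : (DavSet (1 : ZMod p) (-3) 0).Nonempty := ⟨_, hmem⟩
  refine ⟨sInf (DavSet (1 : ZMod p) (-3) 0), isLeast_csInf hne,
    four_le_of_mem_davSet hp5 (Nat.sInf_mem hne), ?_⟩
  rw [hbound]
  exact Nat.sInf_le hmem
end

section
/- Let p be a prime, λ, μ ∈ 𝔽_p nonzero, and take coefficients a = 1, b = λ, c = μ, so that φ(S) = (∑_{x∈S} x)² + λ·(∑_{x∈S} x²) + μ·(∑_{x∈S} x). Set ω₀ = −μ·λ⁻¹. Then: (1) the multiset [ω₀]^{p−1} is φ-zero-free (indeed φ([ω₀]^t) = (t·μ·λ⁻¹)² ≠ 0 for every integer t with 1 ≤ t ≤ p−1); and (2) for every u ∈ 𝔽_p with u ≠ ω₀ there exists an integer t with 1 ≤ t ≤ p−1 such that φ([u]^t) = 0, so that [u]^{p−1} is not φ-zero-free. -/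
lemma phi_replicate {p : ℕ} (lam mu u : ZMod p) (t : ℕ) :
    phi 1 lam mu (Multiset.replicate t u) =
      (t : ZMod p) * u * ((t : ZMod p) * u + lam * u + mu) := by
  simp only [phi, Multiset.map_replicate, Multiset.sum_replicate, nsmul_eq_mul]
  ring

/-- Lemma 4.2: with `φ(S) = (∑x)² + λ(∑x²) + μ(∑x)` (`λ, μ ≠ 0`) and
`ω₀ = -μ·λ⁻¹`, the multiset `[ω₀]^(p-1)` is φ-zero-free, with
`φ([ω₀]^t) = (t·μ·λ⁻¹)² ≠ 0` for `1 ≤ t ≤ p - 1`; and for every `u ≠ ω₀` there is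
`1 ≤ t ≤ p - 1` with `φ([u]^t) = 0`, so `[u]^(p-1)` is not φ-zero-free. -/
theorem omega_extremal_among_constant (p : ℕ) (hp : p.Prime)
    (lam mu : ZMod p) (hlam : lam ≠ 0) (hmu : mu ≠ 0)
    (ω₀ : ZMod p) (hω : ω₀ = -(mu * lam⁻¹)) :
    (PhiZeroFree 1 lam mu (Multiset.replicate (p - 1) ω₀) ∧
      ∀ t : ℕ, 1 ≤ t → t ≤ p - 1 →
        phi 1 lam mu (Multiset.replicate t ω₀) = ((t : ZMod p) * mu * lam⁻¹) ^ 2 ∧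
        phi 1 lam mu (Multiset.replicate t ω₀) ≠ 0) ∧
    (∀ u : ZMod p, u ≠ ω₀ →
      (∃ t : ℕ, 1 ≤ t ∧ t ≤ p - 1 ∧ phi 1 lam mu (Multiset.replicate t u) = 0) ∧
      ¬ PhiZeroFree 1 lam mu (Multiset.replicate (p - 1) u)) := by
  haveI : Fact p.Prime := ⟨hp⟩
  have hp2 := hp.two_le
  have htne : ∀ t : ℕ, 1 ≤ t → t ≤ p - 1 → (t : ZMod p) ≠ 0 := by
    intro t h1 h2 h0
    rw [ZMod.natCast_eq_zero_iff] at h0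
    have := Nat.le_of_dvd (by omega) h0
    omega
  have hval : ∀ t : ℕ, phi 1 lam mu (Multiset.replicate t ω₀) =
      ((t : ZMod p) * mu * lam⁻¹) ^ 2 := by
    intro t
    rw [phi_replicate, hω]
    have h : lam * -(mu * lam⁻¹) = -mu := by
      field_simp
    rw [h]
    ring
  have hne : ∀ t : ℕ, 1 ≤ t → t ≤ p - 1 →
      phi 1 lam mu (Multiset.replicate t ω₀) ≠ 0 := by
    intro t h1 h2
    rw [hval t]
    apply pow_ne_zero
    exact mul_ne_zero (mul_ne_zero (htne t h1 h2) hmu) (inv_ne_zero hlam)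
  refine ⟨⟨?_, fun t h1 h2 => ⟨hval t, hne t h1 h2⟩⟩, ?_⟩
  · intro T hT hT0
    obtain ⟨t, ht, rfl⟩ := (Multiset.le_replicate_iff).mp hT
    have h1 : 1 ≤ t := by
      by_contra h
      exact hT0 (by simp [Nat.lt_one_iff.mp (not_le.mp h)])
    exact hne t h1 ht
  · intro u hu
    have key : ∃ t : ℕ, 1 ≤ t ∧ t ≤ p - 1 ∧ phi 1 lam mu (Multiset.replicate t u) = 0 := by
      by_cases hu0 : u = 0
      · refine ⟨1, le_refl 1, by omega, ?_⟩
        rw [phi_replicate, hu0]; ring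
      · set s : ZMod p := -(lam * u + mu) * u⁻¹ with hs
        have hlu : lam * u + mu ≠ 0 := by
          intro h
          apply hu
          rw [hω]
          have hlu2 : lam * u = -mu := by linear_combination h
          have h2 : lam⁻¹ * (lam * u) = lam⁻¹ * (-mu) := by rw [hlu2]
          rw [← mul_assoc, inv_mul_cancel₀ hlam, one_mul] at h2
          rw [h2]; ring
        have hs0 : s ≠ 0 := mul_ne_zero (neg_ne_zero.mpr hlu) (inv_ne_zero hu0)
        refine ⟨s.val, ?_, ?_, ?_⟩
        · have := ZMod.val_ne_zero s |>.mpr hs0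
          omega
        · have := ZMod.val_lt s
          omega
        · rw [phi_replicate]
          have hcast : ((s.val : ℕ) : ZMod p) = s := by
            simp [ZMod.natCast_val, ZMod.cast_id]
          rw [hcast]
          have hsu : s * u = -(lam * u + mu) := by
            rw [hs]
            field_simp
          rw [hsu]
          ring
    refine ⟨key, ?_⟩
    intro hzf
    obtain ⟨t, h1, h2, h3⟩ := key
    exact hzf (Multiset.replicate t u)
      (Multiset.replicate_le_replicate u |>.mpr h2)
      (by
        intro h0
        have := congrArg Multiset.card h0
        simp at this
        omega) h3
end

section
/- Let p = 3, let μ ∈ 𝔽_3 be nonzero, and take coefficients a = 1, b = 1 (i.e., λ = 1), c = μ, so that φ(S) = (∑_{x∈S} x)² + (∑_{x∈S} x²) + μ·(∑_{x∈S} x). Then D(φ,3) = 3. -/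
lemma key : ∀ mu x y z : ZMod 3, mu ≠ 0 →
    phi 1 1 mu {x} = 0 ∨ phi 1 1 mu {y} = 0 ∨ phi 1 1 mu {z} = 0 ∨
    phi 1 1 mu {x, y} = 0 ∨ phi 1 1 mu {x, z} = 0 ∨ phi 1 1 mu {y, z} = 0 ∨
    phi 1 1 mu {x, y, z} = 0 := by decide

lemma key2 : ∀ mu : ZMod 3, mu ≠ 0 →
    phi 1 1 mu {2 * mu} ≠ 0 ∧ phi 1 1 mu {2 * mu, 2 * mu} ≠ 0 := by decide

lemma three_sub {x y z : ZMod 3} (R : Multiset (ZMod 3)) (mu : ZMod 3) (hmu : mu ≠ 0) :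
    ∃ T : Multiset (ZMod 3), T ≤ x ::ₘ y ::ₘ z ::ₘ R ∧ T ≠ 0 ∧ phi 1 1 mu T = 0 := by
  have hxyz : ({x, y, z} : Multiset (ZMod 3)) ≤ x ::ₘ y ::ₘ z ::ₘ R := by
    rw [Multiset.le_iff_exists_add]
    exact ⟨R, by simp [Multiset.cons_add]⟩
  have h1 : ({x} : Multiset (ZMod 3)) ≤ {x, y, z} := by
    refine Multiset.cons_le_cons x ?_; exact Multiset.zero_le _
  have h2 : ({y} : Multiset (ZMod 3)) ≤ {x, y, z} := by
    refine le_trans ?_ (Multiset.le_cons_self _ x)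
    exact Multiset.cons_le_cons y (Multiset.zero_le _)
  have h3 : ({z} : Multiset (ZMod 3)) ≤ {x, y, z} := by
    refine le_trans ?_ (Multiset.le_cons_self _ x)
    refine le_trans ?_ (Multiset.le_cons_self _ y)
    exact Multiset.cons_le_cons z (Multiset.zero_le _)
  have h12 : ({x, y} : Multiset (ZMod 3)) ≤ {x, y, z} :=
    Multiset.cons_le_cons x (Multiset.cons_le_cons y (Multiset.zero_le _))
  have h13 : ({x, z} : Multiset (ZMod 3)) ≤ {x, y, z} :=
    Multiset.cons_le_cons x (le_trans (Multiset.cons_le_cons z (Multiset.zero_le _))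
      (Multiset.le_cons_self _ y))
  have h23 : ({y, z} : Multiset (ZMod 3)) ≤ {x, y, z} :=
    le_trans (Multiset.cons_le_cons y (Multiset.cons_le_cons z (Multiset.zero_le _)))
      (Multiset.le_cons_self _ x)
  rcases key mu x y z hmu with h | h | h | h | h | h | h
  · exact ⟨{x}, le_trans h1 hxyz, by simp, h⟩
  · exact ⟨{y}, le_trans h2 hxyz, by simp, h⟩
  · exact ⟨{z}, le_trans h3 hxyz, by simp, h⟩
  · exact ⟨{x, y}, le_trans h12 hxyz, by simp, h⟩
  · exact ⟨{x, z}, le_trans h13 hxyz, by simp, h⟩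
  · exact ⟨{y, z}, le_trans h23 hxyz, by simp, h⟩
  · exact ⟨{x, y, z}, hxyz, by simp, h⟩

/-- Lemma 4.3(1): for `p = 3`, `λ = 1` and `μ ≠ 0`, with
`φ(S) = (∑x)² + (∑x²) + μ(∑x)`, we have `D(φ,3) = 3`. -/
theorem davenport_phi_three_lambda_one (mu : ZMod 3) (hmu : mu ≠ 0) :
    IsLeast (DavSet (1 : ZMod 3) 1 mu) 3 := by
  constructor
  · refine ⟨by norm_num, ?_⟩
    intro S hS
    obtain ⟨x, hx⟩ := Multiset.card_pos_iff_exists_mem.mp (show 0 < Multiset.card S by omega)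
    obtain ⟨S1, rfl⟩ := Multiset.exists_cons_of_mem hx
    rw [Multiset.card_cons] at hS
    obtain ⟨y, hy⟩ := Multiset.card_pos_iff_exists_mem.mp (show 0 < Multiset.card S1 by omega)
    obtain ⟨S2, rfl⟩ := Multiset.exists_cons_of_mem hy
    rw [Multiset.card_cons] at hS
    obtain ⟨z, hz⟩ := Multiset.card_pos_iff_exists_mem.mp (show 0 < Multiset.card S2 by omega)
    obtain ⟨S3, rfl⟩ := Multiset.exists_cons_of_mem hz
    exact three_sub S3 mu hmu
  · intro ℓ hℓ
    by_contra hlt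
    push_neg at hlt
    obtain ⟨T, hTle, hT0, hTphi⟩ := hℓ.2 ({2 * mu, 2 * mu} : Multiset (ZMod 3))
      (by simp; omega)
    obtain ⟨hne1, hne2⟩ := key2 mu hmu
    have hcard : Multiset.card T ≤ 2 := by
      have := Multiset.card_le_card hTle
      simpa using this
    have hmem : ∀ t ∈ T, t = 2 * mu := by
      intro t ht
      have := Multiset.mem_of_le hTle ht
      simpa using this
    interval_cases h : Multiset.card T
    · exact hT0 (Multiset.card_eq_zero.mp h)
    · obtain ⟨t, rfl⟩ := Multiset.card_eq_one.mp h
      rw [hmem t (by simp)] at hTphi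
      exact hne1 hTphi
    · obtain ⟨s, t, rfl⟩ := Multiset.card_eq_two.mp h
      rw [hmem s (by simp), hmem t (by simp)] at hTphi
      exact hne2 hTphi
end

section
/- Let p be a prime with p ≥ 5 and let λ, μ ∈ 𝔽_p be nonzero. Then there exists u ∈ 𝔽_p with u ≠ 0 such that −u·(λ·u + μ) is not a square in 𝔽_p (in particular it is nonzero). -/
lemma isSquare_inv_of_isSquare {F : Type*} [Field F] {x : F} (h : IsSquare x) :
    IsSquare x⁻¹ := by
  obtain ⟨r, rfl⟩ := h
  exact ⟨r⁻¹, mul_inv r r⟩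

lemma isSquare_of_sq_mul {F : Type*} [Field F] {c x : F} (hc : c ≠ 0)
    (h : IsSquare (c ^ 2 * x)) : IsSquare x := by
  have : x = (c⁻¹) ^ 2 * (c ^ 2 * x) := by field_simp
  rw [this]
  exact (IsSquare.mul (⟨c⁻¹, (sq c⁻¹)⟩ : IsSquare ((c⁻¹) ^ 2)) h)

/-- Lemma 4.4: for a prime `p ≥ 5` and nonzero `λ, μ ∈ 𝔽_p`, there exists a
nonzero `u ∈ 𝔽_p` such that `-u(λu + μ)` is not a square in `𝔽_p`. -/
theorem exists_nonsquare_value (p : ℕ) (hp : p.Prime) (hp5 : 5 ≤ p)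
    (lam mu : ZMod p) (hlam : lam ≠ 0) (hmu : mu ≠ 0) :
    ∃ u : ZMod p, u ≠ 0 ∧ ¬ IsSquare (-u * (lam * u + mu)) := by
  haveI : Fact p.Prime := ⟨hp⟩
  by_contra hcon
  push_neg at hcon
  -- hcon : ∀ u, u ≠ 0 → IsSquare (-u * (lam * u + mu))
  have h2 : (2 : ZMod p) ≠ 0 := by
    have := (ZMod.natCast_eq_zero_iff 2 p).not.mpr
      (fun h => by have := Nat.le_of_dvd (by norm_num) h; omega)
    simpa using this
  have h3 : (3 : ZMod p) ≠ 0 := by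
    have := (ZMod.natCast_eq_zero_iff 3 p).not.mpr
      (fun h => by have := Nat.le_of_dvd (by norm_num) h; omega)
    simpa using this
  set a : ZMod p := -mu / lam with ha_def
  have ha : a ≠ 0 := by
    rw [ha_def]
    exact div_ne_zero (neg_ne_zero.mpr hmu) hlam
  have hval : ∀ u : ZMod p, lam * u + mu = lam * (u - a) := by
    intro u
    rw [ha_def]
    field_simp
    ring
  -- key : for u ∉ {0, a}, u * (a - u) is a square
  have key : ∀ u : ZMod p, u ≠ 0 → u ≠ a → IsSquare (u * (a - u)) := by
    intro u hu hua
    have ha2 : a / 2 ≠ 0 := div_ne_zero ha h2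
    have s1 := hcon u hu
    have s2 := hcon (a / 2) ha2
    rw [hval] at s1 s2
    have sprod := s1.mul s2
    have heq : -u * (lam * (u - a)) * (-(a / 2) * (lam * (a / 2 - a)))
        = (lam * a / 2) ^ 2 * (u * (a - u)) := by
      field_simp
      ring
    rw [heq] at sprod
    exact isSquare_of_sq_mul (by
      apply div_ne_zero (mul_ne_zero hlam ha) h2) sprod
  -- H3 : for x with x² ≠ 1, 1 - x² is a square
  have H3 : ∀ x : ZMod p, x * x ≠ 1 → IsSquare (1 - x * x) := by
    intro x hx
    have hx1 : x ≠ 1 := fun h => hx (by rw [h]; ring)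
    have hxm1 : x ≠ -1 := fun h => hx (by rw [h]; ring)
    set u : ZMod p := a * (1 + x) / 2 with hu_def
    have hu0 : u ≠ 0 := by
      rw [hu_def]
      apply div_ne_zero (mul_ne_zero ha _) h2
      intro h
      exact hxm1 (by linear_combination h)
    have hua : u ≠ a := by
      rw [hu_def]
      intro h
      apply hx1
      have h' : a * (1 + x) = a * 2 := by
        have := (div_eq_iff h2).mp h
        linear_combination this
      have := mul_left_cancel₀ ha h'
      linear_combination this
    have := key u hu0 hua
    have heq : u * (a - u) = (a / 2) ^ 2 * (1 - x * x) := by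
      rw [hu_def]; field_simp; ring
    rw [heq] at this
    exact isSquare_of_sq_mul (div_ne_zero ha h2) this
  -- H3' : for any square r, 1 - r is a square
  have H3' : ∀ r : ZMod p, IsSquare r → IsSquare (1 - r) := by
    rintro r ⟨x, rfl⟩
    by_cases hx : x * x = 1
    · rw [hx]; simp
    · exact H3 x hx
  -- H4 : difference of squares is a square (if minuend nonzero)
  have H4 : ∀ s t : ZMod p, IsSquare s → IsSquare t → s ≠ 0 → IsSquare (s - t) := by
    intro s t hs ht hs0
    have h1 : IsSquare (t * s⁻¹) := ht.mul (isSquare_inv_of_isSquare hs)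
    have h2' : IsSquare (1 - t * s⁻¹) := H3' _ h1
    have heq : s - t = s * (1 - t * s⁻¹) := by field_simp
    rw [heq]
    exact hs.mul h2'
  -- H5 : every x ≠ -1 is a square
  have H5 : ∀ x : ZMod p, x ≠ -1 → IsSquare x := by
    intro x hx
    have hA : ((x + 1) / 2) ^ 2 ≠ 0 := by
      apply pow_ne_zero
      apply div_ne_zero _ h2
      intro h
      exact hx (by linear_combination h)
    have := H4 (((x + 1) / 2) ^ 2) (((x - 1) / 2) ^ 2)
      ⟨(x + 1) / 2, (sq _)⟩ ⟨(x - 1) / 2, (sq _)⟩ hA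
    have heq : ((x + 1) / 2) ^ 2 - ((x - 1) / 2) ^ 2 = x := by
      field_simp; ring
    rwa [heq] at this
  -- H6 : -1 is a square
  have H6 : IsSquare (-1 : ZMod p) := by
    have hm4 : (-4 : ZMod p) ≠ -1 := by
      intro h
      apply h3
      linear_combination -h
    have hs4 : IsSquare (-4 : ZMod p) := H5 _ hm4
    have heq : (-1 : ZMod p) = (2⁻¹) ^ 2 * (-4) := by field_simp; norm_num
    rw [heq]
    exact IsSquare.mul ⟨2⁻¹, sq 2⁻¹⟩ hs4
  -- every element is a square: contradiction
  obtain ⟨n, hn⟩ := FiniteField.exists_nonsquare (F := ZMod p)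
    (by rw [ZMod.ringChar_zmod_n]; omega)
  apply hn
  by_cases hx : n = -1
  · rw [hx]; exact H6
  · exact H5 n hx
end

section
/- Let p be an odd prime, let λ, μ ∈ 𝔽_p be nonzero, take coefficients a = 1, b = λ, c = μ, so that φ(S) = (∑_{x∈S} x)² + λ·(∑_{x∈S} x²) + μ·(∑_{x∈S} x), and set ω₀ = −μ·λ⁻¹. If S is any φ-zero-free multiset over 𝔽_p in which ω₀ occurs with multiplicity at least p − 1, then the cardinality of S is at most (p−1) + (p−1)/2. -/
namespace Multiset

variable {α β : Type*}

theorem le_map_iff {f : α → β} {s : Multiset α} {t : Multiset β} :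
    t ≤ s.map f ↔ ∃ u ≤ s, u.map f = t := by
  refine ⟨fun h => ?_, fun ⟨u, hu, hut⟩ => hut ▸ map_le_map hu⟩
  induction s using Multiset.induction_on generalizing t with
  | empty => exact ⟨0, le_rfl, (le_zero.mp (by simpa using h)).symm⟩
  | cons a s ih =>
    rw [map_cons] at h
    by_cases ha : f a ∈ t
    · obtain ⟨t', rfl⟩ := exists_cons_of_mem ha
      obtain ⟨u, hu, rfl⟩ := ih ((cons_le_cons_iff _).mp h)
      exact ⟨a ::ₘ u, cons_le_cons a hu, map_cons f a u⟩
    · obtain ⟨u, hu, rfl⟩ := ih ((le_cons_of_notMem ha).mp h)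
      exact ⟨u, hu.trans (le_cons_self s a), rfl⟩

variable [AddCommMonoid α] [DecidableEq α]

def subsetSum (M : Multiset α) : Finset α := (M.powerset.map sum).toFinset

theorem mem_subsetSum_iff {M : Multiset α} {a : α} : a ∈ M.subsetSum ↔ ∃ T ≤ M, T.sum = a := by
  simp [subsetSum]

theorem zero_mem_subsetSum (M : Multiset α) : 0 ∈ M.subsetSum :=
  mem_subsetSum_iff.mpr ⟨0, zero_le M, sum_zero⟩

open scoped Pointwise in
theorem subsetSum_cons (a : α) (M : Multiset α) :
    (a ::ₘ M).subsetSum = {0, a} + M.subsetSum := by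
  ext x
  simp only [subsetSum, powerset_cons, Multiset.map_add, Multiset.map_map, Function.comp_def,
    sum_cons, toFinset_add, Finset.mem_union, mem_toFinset, Multiset.mem_map, Finset.mem_add,
    Finset.mem_insert, Finset.mem_singleton]
  constructor
  · rintro (⟨T, hT, rfl⟩ | ⟨T, hT, rfl⟩)
    · exact ⟨0, Or.inl rfl, _, ⟨T, hT, rfl⟩, zero_add _⟩
    · exact ⟨a, Or.inr rfl, _, ⟨T, hT, rfl⟩, rfl⟩
  · rintro ⟨y, (rfl | rfl), _, ⟨T, hT, rfl⟩, rfl⟩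
    · exact Or.inl ⟨T, hT, (zero_add _).symm⟩
    · exact Or.inr ⟨T, hT, rfl⟩

end Multiset

open Finset in
theorem FiniteField.card_le_two_mul_card_image_sq {R : Type*} [CommRing R] [IsDomain R] [Fintype R]
    [DecidableEq R] : Fintype.card R ≤ 2 * #(univ.image fun x : R => x ^ 2) := by
  have h := FiniteField.card_image_polynomial_eval (p := (Polynomial.X : Polynomial R) ^ 2)
    (by simp)
  simpa only [Polynomial.natDegree_X_pow, Polynomial.eval_pow, Polynomial.eval_X] using h

namespace ZMod

variable {p : ℕ}

theorem min_le_card_subsetSum (hp : p.Prime) {M : Multiset (ZMod p)} (hM : 0 ∉ M) :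
    min p (Multiset.card M + 1) ≤ M.subsetSum.card := by
  induction M using Multiset.induction_on with
  | empty =>
    exact (min_le_right p 1).trans (Finset.card_pos.mpr ⟨0, Multiset.zero_mem_subsetSum 0⟩)
  | cons a M ih =>
    have ha : a ≠ 0 := fun h => hM (h ▸ Multiset.mem_cons_self a M)
    have hcd := cauchy_davenport hp (s := {0, a}) (t := M.subsetSum) ⟨0, by simp⟩
      ⟨0, M.zero_mem_subsetSum⟩
    rw [Finset.card_pair ha.symm] at hcd
    rw [Multiset.subsetSum_cons, Multiset.card_cons]
    have := ih (fun h => hM (Multiset.mem_cons_of_mem h))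
    omega

open Finset in
theorem card_le_of_forall_not_isSquare_sum (hp : p.Prime) (hodd : Odd p) {M : Multiset (ZMod p)}
    (hM : ∀ T ≤ M, T ≠ 0 → ¬IsSquare T.sum) : Multiset.card M ≤ (p - 1) / 2 := by
  have : Fact p.Prime := ⟨hp⟩
  set Q := univ.image fun x : ZMod p => x ^ 2
  have hQ : p ≤ 2 * #Q := by
    simpa only [ZMod.card] using FiniteField.card_le_two_mul_card_image_sq (R := ZMod p)
  have h0 : 0 ∉ M := fun h =>
    hM {0} (Multiset.singleton_le.mpr h) (Multiset.singleton_ne_zero 0) (by simp)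
  have hsums := min_le_card_subsetSum hp h0
  have hinter : M.subsetSum ∩ Q ⊆ {0} := by
    intro z hz
    obtain ⟨hzM, hzQ⟩ := mem_inter.mp hz
    obtain ⟨T, hT, rfl⟩ := Multiset.mem_subsetSum_iff.mp hzM
    obtain ⟨x, -, hx⟩ := mem_image.mp hzQ
    by_contra hne
    exact hM T hT (by rintro rfl; simp at hne) ⟨x, by rw [← hx, sq]⟩
  have hunion : #(M.subsetSum ∪ Q) ≤ p := by
    simpa only [ZMod.card] using card_le_univ (M.subsetSum ∪ Q)
  have := card_union_add_card_inter M.subsetSum Q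
  have := card_singleton (0 : ZMod p) ▸ card_le_card hinter
  have := hp.two_le
  have := Nat.odd_iff.mp hodd
  omega

end ZMod

section Phi

variable {p : ℕ}

theorem phi_replicate_self (a b c x : ZMod p) : phi a b c (Multiset.replicate p x) = 0 := by
  simp [phi, Multiset.sum_replicate]

theorem PhiZeroFree.count_lt [NeZero p] {a b c : ZMod p} {S : Multiset (ZMod p)}
    (hS : PhiZeroFree a b c S) (x : ZMod p) : S.count x < p := by
  by_contra! h
  exact hS _ (Multiset.le_count_iff_replicate_le.mp h)
    (Multiset.card_pos.mp (by simpa using NeZero.pos p))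
    (phi_replicate_self a b c x)

theorem phi_one_replicate_add {lam mu ω : ZMod p} (hω : lam * ω = -mu) (k : ℕ)
    (T : Multiset (ZMod p)) :
    phi 1 lam mu (Multiset.replicate k ω + T) = (k * ω + T.sum) ^ 2 + phi 0 lam mu T := by
  simp only [phi, Multiset.map_add, Multiset.sum_add, Multiset.map_replicate,
    Multiset.sum_replicate, nsmul_eq_mul]
  linear_combination (k * ω) * hω

theorem neg_phi_zero_eq_sum_map (b c : ZMod p) (T : Multiset (ZMod p)) :
    -phi 0 b c T = (T.map fun x => -(b * x ^ 2 + c * x)).sum := by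
  induction T using Multiset.induction_on with
  | empty => simp [phi]
  | cons a T ih =>
    simp only [Multiset.map_cons, Multiset.sum_cons, ← ih, phi]
    ring

theorem PhiZeroFree.not_isSquare_neg_phi_zero [Fact p.Prime] {lam mu ω : ZMod p} (hω0 : ω ≠ 0)
    (hω : lam * ω = -mu) {S : Multiset (ZMod p)} (hS : PhiZeroFree 1 lam mu S)
    (hcount : p - 1 ≤ S.count ω) {T : Multiset (ZMod p)} (hT : T ≤ S.filter (· ≠ ω))
    (hT0 : T ≠ 0) : ¬IsSquare (-phi 0 lam mu T) := by
  rintro ⟨y, hy⟩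
  set k := ((y - T.sum) * ω⁻¹).val
  have hk : (k : ZMod p) * ω = y - T.sum := by simp [k, hω0]
  have hle : Multiset.replicate k ω + T ≤ S :=
    calc Multiset.replicate k ω + T ≤ Multiset.replicate (S.count ω) ω + S.filter (· ≠ ω) :=
          have hkp : k < p := ZMod.val_lt _
          add_le_add ((Multiset.replicate_le_replicate ω).mpr (by omega)) hT
      _ = S := by rw [← Multiset.filter_eq', Multiset.filter_add_not]
  refine hS _ hle (by simp [hT0]) ?_
  rw [phi_one_replicate_add hω, hk]
  linear_combination -hy

end Phi

/-- For an odd prime `p`, nonzero `λ, μ ∈ 𝔽_p`,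
`φ(S) = (∑x)² + λ(∑x²) + μ(∑x)` and `ω₀ = -μ·λ⁻¹`, any φ-zero-free multiset `S`
containing `ω₀` with multiplicity at least `p - 1` has cardinality at most
`(p-1) + (p-1)/2`. -/
theorem card_le_of_phiZeroFree_count_omega (p : ℕ) (hp : p.Prime) (hodd : Odd p)
    (lam mu : ZMod p) (hlam : lam ≠ 0) (hmu : mu ≠ 0)
    (ω₀ : ZMod p) (hω : ω₀ = -(mu * lam⁻¹))
    (S : Multiset (ZMod p)) (hS : PhiZeroFree 1 lam mu S)
    (hcount : p - 1 ≤ S.count ω₀) :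
    Multiset.card S ≤ (p - 1) + (p - 1) / 2 := by
  have : Fact p.Prime := ⟨hp⟩
  have hω0 : ω₀ ≠ 0 := by simp [hω, hmu, hlam]
  have hlamω : lam * ω₀ = -mu := by rw [hω]; field_simp
  have hrest : Multiset.card ((S.filter (· ≠ ω₀)).map fun x => -(lam * x ^ 2 + mu * x))
      ≤ (p - 1) / 2 := by
    refine ZMod.card_le_of_forall_not_isSquare_sum hp hodd fun T' hT' hT'0 => ?_
    obtain ⟨T, hT, rfl⟩ := Multiset.le_map_iff.mp hT'
    rw [← neg_phi_zero_eq_sum_map]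
    exact hS.not_isSquare_neg_phi_zero hω0 hlamω hcount hT (by rintro rfl; simp at hT'0)
  have hsplit : Multiset.card S = S.count ω₀ + Multiset.card (S.filter (· ≠ ω₀)) := by
    rw [← Multiset.card_replicate (S.count ω₀) ω₀, ← Multiset.card_add, ← Multiset.filter_eq',
      Multiset.filter_add_not]
  have := hS.count_lt ω₀
  rw [Multiset.card_map] at hrest
  omega
end

section
/- Let p be a prime with p ≡ 1 or p ≡ −1 (mod 24), and take coefficients a = b = c = 1, so that φ(S) = (∑_{x∈S} x)² + (∑_{x∈S} x²) + (∑_{x∈S} x). Then D(φ,p) ≥ p + 2. -/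
lemma my_sq_mul_nonsquare {F : Type*} [Field F] {v n : F} (hv : v ≠ 0)
    (hn : ¬ IsSquare n) : ¬ IsSquare (v ^ 2 * n) := by
  rintro ⟨t, ht⟩
  refine hn ⟨t / v, ?_⟩
  field_simp
  linear_combination ht

lemma my_quad_ne {F : Type*} [Field F] {b c : F} (h : ¬ IsSquare (b ^ 2 - 4 * c)) :
    ∀ k : F, k ^ 2 + b * k + c ≠ 0 := by
  intro k hk
  exact h ⟨2 * k + b, by linear_combination (-4 : F) * hk⟩

lemma my_decomp {α : Type*} [DecidableEq α] {a b : α} (hab : a ≠ b) {m n : ℕ}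
    {T : Multiset α} (hT : T ≤ Multiset.replicate m a + Multiset.replicate n b) :
    T = Multiset.replicate (T.count a) a + Multiset.replicate (T.count b) b ∧
      T.count a ≤ m ∧ T.count b ≤ n := by
  have hc : ∀ x, T.count x ≤ (Multiset.replicate m a + Multiset.replicate n b).count x :=
    fun x => Multiset.count_le_of_le x hT
  have hba : b ≠ a := Ne.symm hab
  have ha : T.count a ≤ m := by
    have := hc a
    rwa [Multiset.count_add, Multiset.count_replicate, Multiset.count_replicate,
      if_pos rfl, if_neg hba, add_zero] at this
  have hb : T.count b ≤ n := by
    have := hc b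
    rwa [Multiset.count_add, Multiset.count_replicate, Multiset.count_replicate,
      if_neg hab, if_pos rfl, zero_add] at this
  refine ⟨?_, ha, hb⟩
  ext x
  rw [Multiset.count_add, Multiset.count_replicate, Multiset.count_replicate]
  by_cases hxa : a = x
  · subst hxa
    rw [if_pos rfl, if_neg hba, add_zero]
  · by_cases hxb : b = x
    · subst hxb
      rw [if_neg hxa, if_pos rfl, zero_add]
    · rw [if_neg hxa, if_neg hxb, add_zero]
      have := hc x
      rwa [Multiset.count_add, Multiset.count_replicate, Multiset.count_replicate,
        if_neg hxa, if_neg hxb, add_zero, Nat.le_zero] at this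

lemma my_phi_replicate2 {p : ℕ} (x y : ZMod p) (k i : ℕ) :
    phi 1 1 1 (Multiset.replicate k x + Multiset.replicate i y) =
      ((k : ZMod p) * x + (i : ZMod p) * y) ^ 2 +
        ((k : ZMod p) * x ^ 2 + (i : ZMod p) * y ^ 2) +
        ((k : ZMod p) * x + (i : ZMod p) * y) := by
  simp [phi, Multiset.sum_replicate, nsmul_eq_mul]

/-- Corollary 5.1(i): for a prime `p ≡ ±1 (mod 24)` and
`φ(S) = (∑x)² + (∑x²) + (∑x)`, we have `D(φ,p) ≥ p + 2`. -/
theorem davenport_phi_ge_mod24 (p : ℕ) (hp : p.Prime)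
    (hmod : p % 24 = 1 ∨ p % 24 = 23) :
    ∃ D : ℕ, IsLeast (DavSet (1 : ZMod p) 1 1) D ∧ p + 2 ≤ D := by
  haveI : Fact p.Prime := ⟨hp⟩
  have hple := hp.two_le
  have hp5 : 5 ≤ p := by omega
  have hp2 : p ≠ 2 := by omega
  have hndvd : ∀ m : ℕ, 0 < m → m < 5 → (m : ZMod p) ≠ 0 := by
    intro m hm1 hm2 h
    have := (ZMod.natCast_eq_zero_iff m p).mp h
    have := Nat.le_of_dvd hm1 this
    omega
  have h2sq : IsSquare (2 : ZMod p) := by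
    rw [ZMod.exists_sq_eq_two_iff hp2]
    have : p % 8 = p % 24 % 8 := (Nat.mod_mod_of_dvd p (by norm_num)).symm
    omega
  obtain ⟨n₀, hn₀⟩ : ∃ a : ZMod p, ¬ IsSquare a := by
    apply FiniteField.exists_nonsquare
    rw [ZMod.ringChar_zmod_n]; exact hp2
  have h2ne : (2 : ZMod p) ≠ 0 := by
    have := hndvd 2 (by norm_num) (by norm_num); exact_mod_cast this
  have h3ne : (3 : ZMod p) ≠ 0 := by
    have := hndvd 3 (by norm_num) (by norm_num); exact_mod_cast this
  obtain ⟨n, hn, hn1⟩ : ∃ n : ZMod p, ¬ IsSquare n ∧ n + 1 ≠ 0 := by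
    by_cases h : n₀ + 1 = 0
    · have hn₀e : n₀ = -1 := by linear_combination h
      refine ⟨4 * n₀, ?_, ?_⟩
      · have h4 : (4 : ZMod p) * n₀ = 2 ^ 2 * n₀ := by ring
        rw [h4]
        exact my_sq_mul_nonsquare h2ne hn₀
      · rw [hn₀e]
        intro hcon
        apply h3ne
        linear_combination -hcon
    · exact ⟨n₀, hn₀, h⟩
  have hnne : n ≠ 0 := fun h => hn (h ▸ ⟨0, by ring⟩)
  set y : ZMod p := -(n + 1)⁻¹ with hy
  have hinv : (n + 1) * (n + 1)⁻¹ = 1 := mul_inv_cancel₀ hn1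
  have hy1 : y ≠ -1 := by
    intro h
    apply hnne
    have : (n + 1)⁻¹ = 1 := by linear_combination -h
    linear_combination hinv - (n+1) * this
  obtain ⟨s, hs⟩ := h2sq
  have hsne : s ≠ 0 := by
    intro h; exact h2ne (by rw [hs, h, mul_zero])
  have hvne : (2 * (n + 1)⁻¹ : ZMod p) ≠ 0 := by
    intro h
    apply h2ne
    calc (2:ZMod p) = 2 * ((n+1)*(n+1)⁻¹) := by rw [hinv]; ring
    _ = (n+1) * (2 * (n+1)⁻¹) := by ring
    _ = 0 := by rw [h, mul_zero]
  have heq1 : -4*y^2 - 4*y = (2 * (n+1)⁻¹)^2 * n := by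
    rw [hy]
    field_simp
    ring
  have disc1 : ¬ IsSquare (-4*y^2 - 4*y) := by
    rw [heq1]
    exact my_sq_mul_nonsquare hvne hn
  have disc2 : ¬ IsSquare (-8*y^2 - 8*y) := by
    have heq2 : -8*y^2 - 8*y = (s * (2 * (n+1)⁻¹))^2 * n := by
      linear_combination 2*heq1 + (2*(n+1)⁻¹)^2*n*hs
    rw [heq2]
    exact my_sq_mul_nonsquare (mul_ne_zero hsne hvne) hn
  have h1 : ∀ K : ZMod p, K^2 + (-2*y)*K + (2*y^2+y) ≠ 0 := by
    apply my_quad_ne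
    have : (-2*y)^2 - 4*(2*y^2+y) = -4*y^2 - 4*y := by ring
    rw [this]; exact disc1
  have h2 : ∀ K : ZMod p, K^2 + (-4*y)*K + (6*y^2+2*y) ≠ 0 := by
    apply my_quad_ne
    have : (-4*y)^2 - 4*(6*y^2+2*y) = -8*y^2 - 8*y := by ring
    rw [this]; exact disc2
  -- the zero-free multiset of size p+1
  set S₀ : Multiset (ZMod p) :=
    Multiset.replicate (p-1) (-1) + Multiset.replicate 2 y with hS₀
  have hcardS₀ : Multiset.card S₀ = p + 1 := by
    rw [hS₀]; simp [Multiset.card_replicate]; omega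
  have hfree : PhiZeroFree (1 : ZMod p) 1 1 S₀ := by
    intro T hT hT0
    have hne : (-1 : ZMod p) ≠ y := fun h => hy1 h.symm
    obtain ⟨hTeq, hk, hi⟩ := my_decomp hne hT
    set k := T.count (-1) with hkdef
    set i := T.count y with hidef
    have hki : ¬ (k = 0 ∧ i = 0) := by
      rintro ⟨h1', h2'⟩
      apply hT0
      rw [hTeq, h1', h2']
      simp
    rw [hTeq, my_phi_replicate2]
    interval_cases i
    · -- i = 0
      intro h
      have hK : ((k : ZMod p))^2 = 0 := by push_cast at h; linear_combination h
      have hK0 : (k : ZMod p) = 0 := by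
        exact pow_eq_zero_iff (by norm_num) |>.mp hK
      have := (ZMod.natCast_eq_zero_iff k p).mp hK0
      have hk0 : k ≠ 0 := fun h' => hki ⟨h', rfl⟩
      have := Nat.le_of_dvd (Nat.pos_of_ne_zero hk0) this
      omega
    · -- i = 1
      intro h
      apply h1 (k : ZMod p)
      push_cast at h
      linear_combination h
    · -- i = 2
      intro h
      apply h2 (k : ZMod p)
      push_cast at h
      linear_combination h
  -- upper bound: p*p is in DavSet
  haveI : NeZero p := ⟨by omega⟩
  have hmem : p * p ∈ DavSet (1 : ZMod p) 1 1 := by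
    refine ⟨Nat.mul_pos (by omega) (by omega), ?_⟩
    intro S hS
    obtain ⟨a, ha⟩ : ∃ a : ZMod p, p ≤ S.count a := by
      by_contra h
      push_neg at h
      have hsum : Multiset.card S = ∑ a ∈ S.toFinset, S.count a :=
        (Multiset.toFinset_sum_count_eq S).symm
      have hb : ∑ a ∈ S.toFinset, S.count a ≤ S.toFinset.card * (p-1) := by
        apply Finset.sum_le_card_nsmul
        intro x _
        have := h x
        omega
      have hcf : S.toFinset.card ≤ p := by
        have := Finset.card_le_univ S.toFinset
        rwa [ZMod.card] at this
      have : Multiset.card S ≤ p * (p-1) := by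
        calc Multiset.card S = ∑ a ∈ S.toFinset, S.count a := hsum
        _ ≤ S.toFinset.card * (p-1) := hb
        _ ≤ p * (p-1) := Nat.mul_le_mul_right _ hcf
      have h' : p*(p-1) < p*p := by
        have h1 : p * (p - 1 + 1) = p*(p-1) + p := by ring
        rw [show p - 1 + 1 = p by omega] at h1
        omega
      omega
    refine ⟨Multiset.replicate p a, Multiset.le_count_iff_replicate_le.mp ha, ?_, ?_⟩
    · intro h
      have := congrArg Multiset.card h
      rw [Multiset.card_replicate] at this
      simp at this
      omega
    · simp [phi, Multiset.sum_replicate, nsmul_eq_mul, ZMod.natCast_self]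
  have hne : (DavSet (1 : ZMod p) 1 1).Nonempty := ⟨p * p, hmem⟩
  refine ⟨sInf (DavSet (1 : ZMod p) 1 1),
    ⟨Nat.sInf_mem hne, fun x hx => Nat.sInf_le hx⟩, ?_⟩
  by_contra hcon
  push_neg at hcon
  obtain ⟨-, hprop⟩ := Nat.sInf_mem hne
  obtain ⟨T, hTle, hT0, hTphi⟩ := hprop S₀ (by rw [hcardS₀]; omega)
  exact hfree T hTle hT0 hTphi
end

section
/- Let p be a prime with p ≡ 1, −1, 49, or −49 (mod 120), and take coefficients a = b = c = 1, so that φ(S) = (∑_{x∈S} x)² + (∑_{x∈S} x²) + (∑_{x∈S} x). Then D(φ,p) ≥ p + 6. -/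
/-! The congruences on `p` make `2`, `3` and `5`, hence `1, …, 6`, quadratic residues mod `p`
(quadratic reciprocity), and `2` being a residue yields a `y` with `-(y² + y)` a non-residue.
Then `p - 1` copies of `-1` together with six copies of `y` form a φ-zero-free multiset of size
`p + 5`. -/

theorem Multiset.exists_eq_add_of_le_add {α : Type*} [DecidableEq α] {s t u : Multiset α}
    (h : s ≤ t + u) : ∃ t' ≤ t, ∃ u' ≤ u, s = t' + u' :=
  ⟨s ∩ t, Multiset.inter_le_right, s - t, Multiset.sub_le_iff_le_add'.mpr h,
    by rw [add_comm, Multiset.sub_add_inter]⟩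

theorem Multiset.exists_eq_replicate_add_replicate_of_le {α : Type*} {s : Multiset α}
    {a b : α} {m n : ℕ} (h : s ≤ replicate m a + replicate n b) :
    ∃ k ≤ m, ∃ j ≤ n, s = replicate k a + replicate j b := by
  classical
  obtain ⟨t, ht, u, hu, rfl⟩ := Multiset.exists_eq_add_of_le_add h
  obtain ⟨k, hk, rfl⟩ := Multiset.le_replicate_iff.mp ht
  obtain ⟨j, hj, rfl⟩ := Multiset.le_replicate_iff.mp hu
  exact ⟨k, hk, j, hj, rfl⟩

namespace ZMod

theorem natCast_ne_zero_of_pos_of_lt {n m : ℕ} (h0 : 0 < m) (h : m < n) : (m : ZMod n) ≠ 0 := by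
  rw [Ne, natCast_eq_zero_iff]
  exact Nat.not_dvd_of_pos_of_lt h0 h

variable {p : ℕ} [Fact p.Prime]

/-- If every `1 - w²` were a square, the squares would be closed under `t ↦ 1 - t`; with `2` a
square this makes `-1` a square, then the squares closed under `t ↦ t + 1`, so everything is a
square. -/
theorem exists_not_isSquare_one_sub_sq (hp2 : p ≠ 2) (h2 : IsSquare (2 : ZMod p)) :
    ∃ w : ZMod p, ¬IsSquare (1 - w ^ 2) := by
  by_contra! h
  have one_sub : ∀ t : ZMod p, IsSquare t → IsSquare (1 - t) := by
    rintro t ⟨r, rfl⟩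
    simpa [sq] using h r
  have neg_one : IsSquare (-1 : ZMod p) := by
    simpa [show (1 : ZMod p) - 2 = -1 by ring] using one_sub 2 h2
  have add_one : ∀ t : ZMod p, IsSquare t → IsSquare (t + 1) := fun t ht => by
    simpa [add_comm] using one_sub _ (neg_one.mul ht)
  have natCast : ∀ n : ℕ, IsSquare (n : ZMod p) := fun n => by
    induction n with
    | zero => exact ⟨0, by simp⟩
    | succ k ih => exact_mod_cast add_one _ ih
  obtain ⟨x, hx⟩ := FiniteField.exists_nonsquare (F := ZMod p) (by rwa [ZMod.ringChar_zmod_n])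
  exact hx (natCast_zmod_val x ▸ natCast x.val)

theorem exists_not_isSquare_neg_sq_add_self (hp2 : p ≠ 2) (h2 : IsSquare (2 : ZMod p)) :
    ∃ y : ZMod p, ¬IsSquare (-(y ^ 2 + y)) := by
  obtain ⟨w, hw⟩ := exists_not_isSquare_one_sub_sq hp2 h2
  have h2ne : (2 : ZMod p) ≠ 0 := by
    exact_mod_cast natCast_ne_zero_of_pos_of_lt two_pos ((Fact.out : p.Prime).two_le.lt_of_ne' hp2)
  refine ⟨(w - 1) / 2, fun hsq => hw ?_⟩
  have h4 : 1 - w ^ 2 = 2 ^ 2 * -(((w - 1) / 2) ^ 2 + (w - 1) / 2) := by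
    field_simp
    ring
  rw [h4]
  exact (IsSquare.sq 2).mul hsq

theorem isSquare_three (hp : p % 12 = 1 ∨ p % 12 = 11) : IsSquare (3 : ZMod p) := by
  rcases hp with hp | hp
  · have h := exists_sq_eq_prime_iff_of_mod_four_eq_one (p := p) (q := 3) (by omega) (by norm_num)
    rw [show ((p : ℕ) : ZMod 3) = 1 by rw [← natCast_mod, show p % 3 = 1 by omega]; rfl] at h
    exact_mod_cast h.mpr IsSquare.one
  · have h := exists_sq_eq_prime_iff_of_mod_four_eq_three (p := p) (q := 3) (by omega)
      (by norm_num) (by omega)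
    rw [show ((p : ℕ) : ZMod 3) = 2 by rw [← natCast_mod, show p % 3 = 2 by omega]; rfl] at h
    exact_mod_cast h.mpr (by decide)

theorem isSquare_five (hp2 : p ≠ 2) (hp : p % 5 = 1 ∨ p % 5 = 4) : IsSquare (5 : ZMod p) := by
  have : Fact (Nat.Prime 5) := ⟨by norm_num⟩
  have h := exists_sq_eq_prime_iff_of_mod_four_eq_one (p := 5) (q := p) (by norm_num) hp2
  have hp5 : IsSquare ((p : ℕ) : ZMod 5) := by
    rw [← natCast_mod]
    rcases hp with hp | hp <;> rw [hp]
    exacts [⟨1, rfl⟩, ⟨2, rfl⟩]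
  exact_mod_cast h.mp hp5

theorem isSquare_natCast_of_mod_120
    (hmod : p % 120 = 1 ∨ p % 120 = 119 ∨ p % 120 = 49 ∨ p % 120 = 71) :
    ∀ j : ℕ, 0 < j → j ≤ 6 → IsSquare (j : ZMod p) := by
  have hp2 : p ≠ 2 := by omega
  have h2 : IsSquare (2 : ZMod p) := (exists_sq_eq_two_iff hp2).mpr (by omega)
  have h3 := isSquare_three (p := p) (by omega)
  have h5 := isSquare_five hp2 (by omega)
  intro j hj0 hj6
  interval_cases j
  · exact_mod_cast IsSquare.one
  · exact_mod_cast h2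
  · exact_mod_cast h3
  · exact ⟨2, by norm_num⟩
  · exact_mod_cast h5
  · exact_mod_cast h2.mul h3

end ZMod

section Davenport

variable {p : ℕ}

/-- Pigeonhole: some value occurs `p` times, and `p` equal elements have `φ = 0`. -/
theorem mul_self_mem_davSet [NeZero p] (a b c : ZMod p) : p * p ∈ DavSet a b c := by
  refine ⟨Nat.mul_pos (NeZero.pos p) (NeZero.pos p), fun S hS => ?_⟩
  have hsum : ∑ _x : ZMod p, p ≤ ∑ x : ZMod p, S.count x := by
    simpa [Multiset.sum_count_eq_card, ZMod.card] using hS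
  obtain ⟨x, -, hx⟩ := Finset.exists_le_of_sum_le Finset.univ_nonempty hsum
  refine ⟨Multiset.replicate p x, Multiset.le_count_iff_replicate_le.mp hx, ?_,
    phi_replicate_self a b c x⟩
  simpa [← Multiset.card_eq_zero] using NeZero.ne p

theorem card_lt_of_phiZeroFree_of_mem_davSet {a b c : ZMod p} {S : Multiset (ZMod p)} {ℓ : ℕ}
    (hS : PhiZeroFree a b c S) (hℓ : ℓ ∈ DavSet a b c) : Multiset.card S < ℓ := by
  by_contra! hle
  obtain ⟨T, hTS, hT0, hT⟩ := hℓ.2 S hle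
  exact hS T hTS hT0 hT

theorem phi_one_replicate_neg_one_add_replicate (k j : ℕ) (y : ZMod p) :
    phi 1 1 1 (Multiset.replicate k (-1) + Multiset.replicate j y) =
      ((k : ZMod p) - (j : ZMod p) * y) ^ 2 + (j : ZMod p) * (y ^ 2 + y) := by
  simp only [phi, Multiset.sum_add, Multiset.map_add, Multiset.map_replicate,
    Multiset.sum_replicate, nsmul_eq_mul]
  ring

/-- For `j ≠ 0`, `φ = 0` would make `-(y² + y) = (k - j y)² / j` a square; for `j = 0`,
`φ = k² ≠ 0` because `0 < k < p`. -/
theorem phiZeroFree_replicate_neg_one_add_replicate [Fact p.Prime] {y : ZMod p}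
    (hy : ¬IsSquare (-(y ^ 2 + y))) {n : ℕ} (hn : n < p)
    (hsq : ∀ j : ℕ, 0 < j → j ≤ n → IsSquare (j : ZMod p)) :
    PhiZeroFree 1 1 1 (Multiset.replicate (p - 1) (-1) + Multiset.replicate n y) := by
  intro T hT hT0 hphi
  obtain ⟨k, hk, j, hj, rfl⟩ := Multiset.exists_eq_replicate_add_replicate_of_le hT
  rw [phi_one_replicate_neg_one_add_replicate] at hphi
  rcases j.eq_zero_or_pos with rfl | hj0
  · have hk0 : 0 < k := Nat.pos_of_ne_zero (by rintro rfl; simp at hT0)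
    have hkp : (k : ZMod p) ≠ 0 := ZMod.natCast_ne_zero_of_pos_of_lt hk0 (by omega)
    simp_all
  · have hjp : (j : ZMod p) ≠ 0 := ZMod.natCast_ne_zero_of_pos_of_lt hj0 (by omega)
    have hprod : IsSquare (j * -(y ^ 2 + y) : ZMod p) :=
      ⟨k - j * y, by linear_combination -hphi⟩
    apply hy
    simpa [mul_div_cancel_left₀ _ hjp] using hprod.div (hsq j hj0 hj)

end Davenport

/-- Corollary 5.1(iii): for a prime `p ≡ ±1` or `±49 (mod 120)` and
`φ(S) = (∑x)² + (∑x²) + (∑x)`, we have `D(φ,p) ≥ p + 6`. -/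
theorem davenport_phi_ge_mod120 (p : ℕ) (hp : p.Prime)
    (hmod : p % 120 = 1 ∨ p % 120 = 119 ∨ p % 120 = 49 ∨ p % 120 = 71) :
    ∃ D : ℕ, IsLeast (DavSet (1 : ZMod p) 1 1) D ∧ p + 6 ≤ D := by
  have := Fact.mk hp
  have hp7 : 7 ≤ p := by have := hp.two_le; omega
  have hp2 : p ≠ 2 := by omega
  obtain ⟨y, hy⟩ := ZMod.exists_not_isSquare_neg_sq_add_self hp2
    ((ZMod.exists_sq_eq_two_iff hp2).mpr (by omega))
  have hfree := phiZeroFree_replicate_neg_one_add_replicate hy (n := 6) (by omega)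
    (ZMod.isSquare_natCast_of_mod_120 hmod)
  have hleast := isLeast_csInf ⟨_, mul_self_mem_davSet (1 : ZMod p) 1 1⟩
  refine ⟨_, hleast, ?_⟩
  have hcard := card_lt_of_phiZeroFree_of_mem_davSet hfree hleast.1
  simp only [Multiset.card_add, Multiset.card_replicate] at hcard
  omega
end

section
/- Let p be a prime with p ≥ 5. Then there exists an integer z with 1 ≤ z ≤ 4 such that the reductions of z and z + 1 modulo p are both nonzero, and either both are squares in 𝔽_p or both are non-squares in 𝔽_p (i.e., the Legendre symbols of z and z + 1 modulo p are equal and nonzero). -/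
lemma small_ne_zero_mod (p n : ℕ) (hp : p.Prime) (hp5 : 5 ≤ p)
    (h1 : 1 ≤ n) (h4 : n ≤ 4) : (n : ZMod p) ≠ 0 := by
  haveI : NeZero p := ⟨hp.ne_zero⟩
  rw [Ne, ZMod.natCast_eq_zero_iff]
  intro hdvd
  have := Nat.le_of_dvd (by omega) hdvd
  omega

/-- For a prime `p ≥ 5` there is an integer `z` with `1 ≤ z ≤ 4` such that `z`
and `z + 1` are both nonzero modulo `p` and are either both squares or both
non-squares in `𝔽_p`. -/
theorem exists_consecutive_same_quadratic_character (p : ℕ) (hp : p.Prime)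
    (hp5 : 5 ≤ p) :
    ∃ z : ℕ, 1 ≤ z ∧ z ≤ 4 ∧ (z : ZMod p) ≠ 0 ∧ (z : ZMod p) + 1 ≠ 0 ∧
      ((IsSquare ((z : ZMod p)) ∧ IsSquare ((z : ZMod p) + 1)) ∨
        (¬ IsSquare ((z : ZMod p)) ∧ ¬ IsSquare ((z : ZMod p) + 1))) := by
  have h1 := small_ne_zero_mod p 1 hp hp5 (by norm_num) (by norm_num)
  have h2 := small_ne_zero_mod p 2 hp hp5 (by norm_num) (by norm_num)
  have h3 := small_ne_zero_mod p 3 hp hp5 (by norm_num) (by norm_num)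
  have h4 := small_ne_zero_mod p 4 hp hp5 (by norm_num) (by norm_num)
  by_cases hs2 : IsSquare (2 : ZMod p)
  · refine ⟨1, le_refl 1, by norm_num, ?_, ?_, Or.inl ⟨?_, ?_⟩⟩
    · simpa using h1
    · push_cast
      have : (1 : ZMod p) + 1 = 2 := by ring
      rw [this]; simpa using h2
    · simp
    · push_cast
      have : (1 : ZMod p) + 1 = 2 := by ring
      rw [this]; exact hs2
  · by_cases hs3 : IsSquare (3 : ZMod p)
    · refine ⟨3, by norm_num, by norm_num, ?_, ?_, Or.inl ⟨?_, ?_⟩⟩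
      · simpa using h3
      · push_cast
        have : (3 : ZMod p) + 1 = 4 := by ring
        rw [this]; simpa using h4
      · push_cast; exact hs3
      · push_cast
        have : (3 : ZMod p) + 1 = 4 := by ring
        rw [this]; exact ⟨2, by norm_num⟩
    · refine ⟨2, by norm_num, by norm_num, ?_, ?_, Or.inr ⟨?_, ?_⟩⟩
      · simpa using h2
      · push_cast
        have : (2 : ZMod p) + 1 = 3 := by ring
        rw [this]; simpa using h3
      · push_cast; exact hs2
      · push_cast
        have : (2 : ZMod p) + 1 = 3 := by ring
        rw [this]; exact hs3
end
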